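/- arXiv:2203.00169 — 7 statements merged into one kernel-verified Lean document; each statement's English description precedes it below -/
import Mathlib

section
/- For every natural number r and infinite cardinal μ, the partition relation (ℶ_r(μ))⁺ → (μ⁺)^{r+1}_μ holds: every coloring of the (r+1)-element subsets of a set of cardinality (ℶ_r(μ))⁺ into at most μ colors admits a homogeneous subset of cardinality μ⁺. -/
open Cardinal

/-- The iterated beth function starting at `μ`: `ℶ_0(μ) = μ`, `ℶ_{r+1}(μ) = 2 ^ ℶ_r(μ)`. -/
def iterBeth (μ : Cardinal.{u}) : ℕ → Cardinal.{u}
  | 0 => μ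
  | n + 1 => 2 ^ iterBeth μ n

/-!
Induction on `r`, the case `r = 0` being the pigeonhole principle for the regular cardinal `μ⁺`.
For the step let `ν = ℶ_r(μ)` and let `c` colour the `(r+2)`-sets of `α`, `#α = (2^ν)⁺`. Call the
map `s ↦ c (insert u s)`, on finite `s ⊆ B`, the type of `u` over `B`. There are at most `2^ν` types
over a set of size `ν`, so some `A ⊆ α` of size `2^ν` realizes every type over every `B ⊆ A` of
size `ν` by a point outside `B`. Fix `u ∉ A` and choose `x_i ∈ A`, `i < ν⁺`, realizing the type of
`u` over `{x_j | j < i}`. The colour of `x '' T` is then `c (insert u (x '' (T \ {max T})))`, and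
the induction hypothesis applied to the colouring `t ↦ c (insert u (x '' t))` of `ν⁺` concludes.
-/

open Set Function Order

universe u

theorem le_iterBeth (μ : Cardinal.{u}) : ∀ r, μ ≤ iterBeth μ r
  | 0 => le_rfl
  | r + 1 => (le_iterBeth μ r).trans (cantor _).le

theorem exists_eq_apply_image_Iio {ι γ : Type*} [Preorder ι] [WellFoundedLT ι] (G : Set γ → γ) :
    ∃ x : ι → γ, ∀ i, x i = G (x '' Iio i) :=
  ⟨WellFoundedLT.fix fun i x => G (range fun j : Iio i => x j j.2), fun i => by
    rw [WellFoundedLT.fix_eq, image_eq_range]⟩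

section Cardinal

variable {α : Type u}

theorem mk_finset_le_of_le {ν : Cardinal.{u}} (hν : ℵ₀ ≤ ν) (hα : #α ≤ ν) : #(Finset α) ≤ ν := by
  classical
  exact (mk_le_of_surjective List.toFinset_surjective).trans
    ((mk_list_le_max α).trans (max_le hν hα))

theorem mk_sUnion_le_of_le {c : Cardinal.{u}} (hc : ℵ₀ ≤ c) {S : Set (Set α)} (hS : #S ≤ c)
    (h : ∀ s ∈ S, #s ≤ c) : #(⋃₀ S) ≤ c :=
  (mk_sUnion_le S).trans (mul_le_of_le hc hS (ciSup_le' fun s => h s s.2))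

theorem exists_subset_sUnion_image_Iio {ι : Type u} [LinearOrder ι] (x : ι → Set α) {B : Set α}
    (hB : #B < Order.cof ι) (hBx : B ⊆ ⋃ i, x i) : ∃ i, B ⊆ ⋃₀ (x '' Iio i) := by
  choose g hg using fun b : B => mem_iUnion.1 (hBx b.2)
  obtain ⟨i, hi⟩ := not_isCofinal_iff.1 fun h : IsCofinal (range g) =>
    (cof_le h).not_gt (mk_range_le.trans_lt hB)
  exact ⟨i, fun b hb => ⟨x (g ⟨b, hb⟩), mem_image_of_mem x (hi _ (mem_range_self _)), hg _⟩⟩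

theorem mk_Iio_le_of_toType_succ_ord {ν : Cardinal.{u}} (i : (succ ν).ord.ToType) :
    #(Iio i) ≤ ν :=
  lt_succ_iff.1 (by simpa using mk_Iio_lt i)

theorem cof_toType_succ_ord {ν : Cardinal.{u}} (hν : ℵ₀ ≤ ν) :
    Order.cof (succ ν).ord.ToType = succ ν := by
  rw [Ordinal.cof_toType, (isRegular_succ hν).cof_ord]

end Cardinal

section Closure

variable {α : Type u}

theorem exists_closed_of_mk_le {ν κ : Cardinal.{u}} (hν : ℵ₀ ≤ ν) (hνκ : ν < κ) (hκ : κ ^ ν ≤ κ)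
    (W : Set α → Set α) (hW : ∀ B : Set α, #B ≤ ν → #(W B) ≤ κ) :
    ∃ A : Set α, #A ≤ κ ∧ ∀ B ⊆ A, #B ≤ ν → W B ⊆ A := by
  have hκ₀ : ℵ₀ ≤ κ := hν.trans hνκ.le
  let close (C : Set α) : Set α := C ∪ ⋃ B : {B : Set α // B ⊆ C ∧ #B ≤ ν}, W B
  have mk_close {C : Set α} (hC : #C ≤ κ) : #(close C) ≤ κ := by
    have hsmall : #{B : Set α // B ⊆ C ∧ #B ≤ ν} ≤ κ := calc
      _ ≤ max #C ℵ₀ ^ ν := mk_bounded_subset_le C ν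
      _ ≤ κ ^ ν := power_le_power_right (max_le hC hκ₀)
      _ ≤ κ := hκ
    refine (mk_union_le _ _).trans (add_le_of_le hκ₀ hC ?_)
    exact (mk_iUnion_le _).trans (mul_le_of_le hκ₀ hsmall (ciSup_le' fun B => hW B B.2.2))
  -- Stages indexed by `ν⁺`: by regularity, every `B ⊆ A` of size `ν` lies in an earlier stage.
  obtain ⟨A, hA⟩ := exists_eq_apply_image_Iio (ι := (succ ν).ord.ToType) fun S => close (⋃₀ S)
  have mk_A (i) : #(A i) ≤ κ := by
    induction i using WellFoundedLT.induction with
    | ind i ih =>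
      rw [hA]
      refine mk_close (mk_sUnion_le_of_le hκ₀ (mk_image_le.trans ?_) ?_)
      · exact (mk_Iio_le_of_toType_succ_ord i).trans hνκ.le
      · rintro _ ⟨j, hj, rfl⟩
        exact ih j hj
  refine ⟨⋃ i, A i, ?_, fun B hBA hB => ?_⟩
  · rw [← sUnion_range]
    refine mk_sUnion_le_of_le hκ₀ (mk_range_le.trans ?_) (by rintro _ ⟨i, rfl⟩; exact mk_A i)
    simpa using succ_le_of_lt hνκ
  · obtain ⟨i, hi⟩ := exists_subset_sUnion_image_Iio A
      (hB.trans_lt ((cof_toType_succ_ord hν).symm ▸ lt_succ ν)) hBA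
    exact (subset_iUnion_of_subset ⟨B, hi, hB⟩ subset_rfl).trans
      ((subset_union_right).trans ((hA i).symm ▸ subset_iUnion A i))

theorem exists_seq_of_forall_exists {ι : Type u} [Preorder ι] [WellFoundedLT ι]
    {ν : Cardinal.{u}} (hι : ∀ i : ι, #(Iio i) ≤ ν) {A : Set α} {P : Set α → α → Prop}
    (hP : ∀ B ⊆ A, #B ≤ ν → ∃ v ∈ A, P B v) :
    ∃ x : ι → α, ∀ i, x i ∈ A ∧ P (x '' Iio i) (x i) := by
  obtain ⟨v, -⟩ := hP ∅ (empty_subset A) (by simp)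
  have : Nonempty α := ⟨v⟩
  choose! g hgA hgP using hP
  obtain ⟨x, hx⟩ := exists_eq_apply_image_Iio (ι := ι) g
  have hxA (i) : x i ∈ A := by
    induction i using WellFoundedLT.induction with
    | ind i ih =>
      rw [hx]
      exact hgA _ (image_subset_iff.2 ih) (mk_image_le.trans (hι i))
  refine ⟨x, fun i => ⟨hxA i, ?_⟩⟩
  rw [hx i]
  exact hgP _ (image_subset_iff.2 fun j _ => hxA j) (mk_image_le.trans (hι i))

end Closure

section Types

variable {α β : Type u} [DecidableEq α]

def typeOver (c : Finset α → β) (B : Set α) (u : α) (s : Finset B) : β :=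
  c (insert u (s.map (Embedding.subtype _)))

theorem apply_insert_eq_of_typeOver_eq {c : Finset α → β} {B : Set α} {u v : α}
    (h : typeOver c B v = typeOver c B u) {s : Finset α} (hs : ↑s ⊆ B) :
    c (insert v s) = c (insert u s) := by
  classical
  have hmap : (s.subtype (· ∈ B)).map (Embedding.subtype _) = s := by
    rw [Finset.subtype_map, Finset.filter_true_of_mem fun a ha => hs ha]
  simpa only [typeOver, hmap] using congrFun h (s.subtype (· ∈ B))

theorem exists_realizing_set (c : Finset α → β) (B : Set α) :
    ∃ W : Set α, #W ≤ #β ^ #(Finset B) ∧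
      ∀ u ∉ B, ∃ v ∈ W, v ∉ B ∧ typeOver c B v = typeOver c B u := by
  let φ : ↥Bᶜ → Finset B → β := fun u => typeOver c B u
  refine ⟨range fun p : range φ => (p.2.choose : α), ?_, fun u hu => ?_⟩
  · calc _ ≤ #(range φ) := mk_range_le
      _ ≤ #(Finset B → β) := mk_set_le _
      _ = _ := (power_def ..).symm
  · let p : range φ := ⟨φ ⟨u, hu⟩, mem_range_self _⟩
    exact ⟨p.2.choose, mem_range_self p, p.2.choose.2, p.2.choose_spec⟩

theorem exists_endHomogeneous {ν : Cardinal.{u}} (hν : ℵ₀ ≤ ν) (hβ : #β ≤ 2 ^ ν)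
    (hα : 2 ^ ν < #α) (c : Finset α → β) :
    ∃ (u : α) (x : (succ ν).ord.ToType → α), Injective x ∧
      ∀ i, ∀ s : Finset α, ↑s ⊆ x '' Iio i → c (insert (x i) s) = c (insert u s) := by
  choose W hW hWu using exists_realizing_set c
  have h2ν : ((2 : Cardinal) ^ ν) ^ ν = 2 ^ ν := by rw [← power_mul, mul_eq_self hν]
  obtain ⟨A, hA, hAW⟩ := exists_closed_of_mk_le hν (cantor ν) h2ν.le W fun B hB =>
    calc #(W B) ≤ #β ^ #(Finset B) := hW B
      _ ≤ (2 ^ ν) ^ #(Finset B) := power_le_power_right hβ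
      _ ≤ (2 ^ ν) ^ ν := power_le_power_left (power_ne_zero _ two_ne_zero)
        (mk_finset_le_of_le hν hB)
      _ = 2 ^ ν := h2ν
  obtain ⟨u, hu⟩ := (ne_univ_iff_exists_notMem A).1 fun h =>
    hα.not_ge (by rwa [← mk_univ, ← h])
  obtain ⟨x, hx⟩ := exists_seq_of_forall_exists mk_Iio_le_of_toType_succ_ord
    (P := fun B v => v ∉ B ∧ typeOver c B v = typeOver c B u) fun B hBA hB =>
      let ⟨v, hvW, hv⟩ := hWu B u fun h => hu (hBA h)
      ⟨v, hAW B hBA hB hvW, hv⟩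
  exact ⟨u, x, Injective.of_lt_imp_ne fun i j hij h => (hx j).2.1 ⟨i, hij, h⟩,
    fun i s hs => apply_insert_eq_of_typeOver_eq (hx i).2.2 hs⟩

end Types

section Homogeneous

variable {α β ι : Type*}

def IsHomogeneous (c : Finset α → β) (n : ℕ) (H : Set α) : Prop :=
  ∀ s t : Finset α, ↑s ⊆ H → ↑t ⊆ H → s.card = n → t.card = n → c s = c t

theorem apply_image_eq_apply_insert_image_erase_max' [DecidableEq α] [LinearOrder ι]
    {c : Finset α → β} {x : ι → α} {u : α}
    (hx : ∀ i, ∀ s : Finset α, ↑s ⊆ x '' Iio i → c (insert (x i) s) = c (insert u s))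
    {T : Finset ι} (hT : T.Nonempty) :
    c (T.image x) = c (insert u ((T.erase (T.max' hT)).image x)) := by
  rw [← hx (T.max' hT)]
  · rw [← Finset.image_insert, Finset.insert_erase (T.max'_mem hT)]
  · rw [Finset.coe_image]
    rintro _ ⟨j, hj, rfl⟩
    obtain ⟨hjm, hjT⟩ := Finset.mem_erase.1 hj
    exact mem_image_of_mem x ((T.le_max' j hjT).lt_of_ne hjm)

theorem IsHomogeneous.image_of_endHomogeneous [DecidableEq α] [LinearOrder ι]
    {c : Finset α → β} {x : ι → α} (hx : Injective x) {u : α}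
    (hend : ∀ i, ∀ s : Finset α, ↑s ⊆ x '' Iio i → c (insert (x i) s) = c (insert u s))
    {n : ℕ} {H : Set ι} (hH : IsHomogeneous (fun t => c (insert u (t.image x))) n H) :
    IsHomogeneous c (n + 1) (x '' H) := by
  suffices key : ∀ s : Finset α, ↑s ⊆ x '' H → s.card = n + 1 →
      ∃ t : Finset ι, ↑t ⊆ H ∧ t.card = n ∧ c s = c (insert u (t.image x)) by
    intro s s' hs hs' hsn hs'n
    obtain ⟨t, htH, htn, hct⟩ := key s hs hsn
    obtain ⟨t', ht'H, ht'n, hct'⟩ := key s' hs' hs'n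
    rw [hct, hct']
    exact hH t t' htH ht'H htn ht'n
  intro s hs hsn
  obtain ⟨T, hTH, rfl⟩ := Finset.subset_set_image_iff.1 hs
  rw [Finset.card_image_of_injective _ hx] at hsn
  have hT : T.Nonempty := Finset.card_pos.1 (by omega)
  refine ⟨T.erase (T.max' hT), (Finset.coe_subset.2 (T.erase_subset _)).trans hTH, ?_,
    apply_image_eq_apply_insert_image_erase_max' hend hT⟩
  rw [Finset.card_erase_of_mem (T.max'_mem hT), hsn, Nat.add_sub_cancel]

end Homogeneous

theorem exists_isHomogeneous_one {μ : Cardinal.{u}} (hμ : ℵ₀ ≤ μ) {α β : Type u} (hα : μ < #α)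
    (hβ : #β ≤ μ) (c : Finset α → β) : ∃ H : Set α, #H = succ μ ∧ IsHomogeneous c 1 H := by
  obtain ⟨b, hb⟩ := infinite_pigeonhole_card (fun a => c {a}) (succ μ) (succ_le_of_lt hα)
    (hμ.trans (le_succ μ)) (by rw [(isRegular_succ hμ).cof_ord]; exact hβ.trans_lt (lt_succ μ))
  obtain ⟨H, hHb, hH⟩ := le_mk_iff_exists_subset.1 hb
  refine ⟨H, hH, fun s t hs ht hs1 ht1 => ?_⟩
  obtain ⟨a, rfl⟩ := Finset.card_eq_one.1 hs1
  obtain ⟨a', rfl⟩ := Finset.card_eq_one.1 ht1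
  exact (hHb (by simpa using hs)).trans (hHb (by simpa using ht)).symm

theorem exists_isHomogeneous (r : ℕ) {μ : Cardinal.{u}} (hμ : ℵ₀ ≤ μ) {α β : Type u}
    (hα : iterBeth μ r < #α) (hβ : #β ≤ μ) (c : Finset α → β) :
    ∃ H : Set α, #H = succ μ ∧ IsHomogeneous c (r + 1) H := by
  induction r generalizing α with
  | zero => exact exists_isHomogeneous_one hμ hα hβ c
  | succ r ih =>
    classical
    have hν : ℵ₀ ≤ iterBeth μ r := hμ.trans (le_iterBeth μ r)
    obtain ⟨u, x, hx, hend⟩ :=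
      exists_endHomogeneous hν (hβ.trans (le_iterBeth μ (r + 1))) hα c
    obtain ⟨H, hH, hHom⟩ := ih (by simp) fun t => c (insert u (t.image x))
    exact ⟨x '' H, by rw [mk_image_eq hx, hH], hHom.image_of_endHomogeneous hx hend⟩

/-- The Erdős–Rado theorem: `(ℶ_r(μ))⁺ → (μ⁺)^{r+1}_μ`.  Every coloring of the
`(r+1)`-element subsets of a set of cardinality `(ℶ_r(μ))⁺` into at most `μ` colors
admits a homogeneous subset of cardinality `μ⁺`. -/
theorem erdos_rado (r : ℕ) (μ : Cardinal.{u}) (hμ : ℵ₀ ≤ μ)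
    {α : Type u} (hα : #α = Order.succ (iterBeth μ r))
    {β : Type u} (hβ : #β ≤ μ)
    (f : {s : Finset α // s.card = r + 1} → β) :
    ∃ H : Set α, #H = Order.succ μ ∧
      ∀ s t : {s : Finset α // s.card = r + 1},
        ↑s.val ⊆ H → ↑t.val ⊆ H → f s = f t := by
  let c (s : Finset α) : Option β := if h : s.card = r + 1 then some (f ⟨s, h⟩) else none
  have hβ' : #(Option β) ≤ μ := mk_option ▸ add_le_of_le hμ hβ (one_le_aleph0.trans hμ)
  obtain ⟨H, hH, hHom⟩ := exists_isHomogeneous r hμ (hα ▸ lt_succ _) hβ' c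
  refine ⟨H, hH, fun s t hs ht => Option.some_injective β ?_⟩
  simpa [c, s.2, t.2] using hHom s t hs ht s.2 t.2
end

section
/- A subset X of the Baire space [ℕ]^ℕ that is open in the metric (product) topology is Ramsey: for every infinite M ⊆ ℕ there is an infinite N ⊆ M such that either every infinite subset of N belongs to X, or no infinite subset of N belongs to X. -/
/-- The space `[ℕ]^ℕ` of infinite subsets of `ℕ`. -/
def BaireInf : Type := {A : Set ℕ // A.Infinite}

/-- The metric (product) topology on `[ℕ]^ℕ`, induced from the product topology on `ℕ → Bool`
via characteristic functions. -/
noncomputable instance : TopologicalSpace BaireInf :=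
  TopologicalSpace.induced
    (fun A (n : ℕ) => @decide (n ∈ A.val) (Classical.dec _)) inferInstance

namespace GPAux

/-- `s` is accepted with witness `M`: every infinite set containing `s` whose remaining
elements all lie in `M` belongs to `X`. -/
def Acc (X : Set BaireInf) (s : Finset ℕ) (M : Set ℕ) : Prop :=
  ∀ (A : Set ℕ) (hA : A.Infinite), ↑s ⊆ A → A \ ↑s ⊆ M → (⟨A, hA⟩ : BaireInf) ∈ X

/-- `M` rejects `s`: no infinite subset of `M` accepts `s`. -/
def Rej (X : Set BaireInf) (s : Finset ℕ) (M : Set ℕ) : Prop :=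
  ∀ P : Set ℕ, P ⊆ M → P.Infinite → ¬ Acc X s P

lemma Acc.mono {X : Set BaireInf} {s : Finset ℕ} {M M' : Set ℕ}
    (h : Acc X s M) (hsub : M' ⊆ M) : Acc X s M' :=
  fun A hA h1 h2 => h A hA h1 (h2.trans hsub)

lemma Rej.mono {X : Set BaireInf} {s : Finset ℕ} {M M' : Set ℕ}
    (h : Rej X s M) (hsub : M' ⊆ M) : Rej X s M' :=
  fun P hP => h P (hP.trans hsub)

lemma decide_one (X : Set BaireInf) (s : Finset ℕ) {M : Set ℕ} (hM : M.Infinite) :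
    ∃ P, P ⊆ M ∧ P.Infinite ∧ (Acc X s P ∨ Rej X s P) := by
  by_cases h : Rej X s M
  · exact ⟨M, subset_rfl, hM, Or.inr h⟩
  · simp only [Rej, not_forall, not_not] at h
    obtain ⟨P, hPM, hPinf, hAcc⟩ := h
    exact ⟨P, hPM, hPinf, Or.inl hAcc⟩

lemma decide_finset (X : Set BaireInf) (T : Finset (Finset ℕ)) {M : Set ℕ} (hM : M.Infinite) :
    ∃ P, P ⊆ M ∧ P.Infinite ∧ ∀ t ∈ T, Acc X t P ∨ Rej X t P := by
  classical
  induction T using Finset.induction_on generalizing M with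
  | empty => exact ⟨M, subset_rfl, hM, by simp⟩
  | @insert t T hnm ih =>
    obtain ⟨P, hPM, hPinf, hPdec⟩ := ih hM
    obtain ⟨Q, hQP, hQinf, hQdec⟩ := decide_one X t hPinf
    refine ⟨Q, hQP.trans hPM, hQinf, ?_⟩
    intro u hu
    rcases Finset.mem_insert.mp hu with rfl | hu
    · exact hQdec
    · rcases hPdec u hu with h | h
      · exact Or.inl (h.mono hQP)
      · exact Or.inr (h.mono hQP)

lemma inter_Ioi_infinite {M : Set ℕ} (hM : M.Infinite) (n : ℕ) :
    (M ∩ Set.Ioi n).Infinite := by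
  exact (hM.diff (Set.finite_Iic n)).mono (fun x hx => ⟨hx.1, by simpa using hx.2⟩)

lemma open_nbhd {X : Set BaireInf} (hX : IsOpen X) (A : BaireInf) (hAX : A ∈ X) :
    ∃ n, ∀ B : BaireInf, (∀ k < n, (k ∈ B.val ↔ k ∈ A.val)) → B ∈ X := by
  rw [isOpen_induced_iff] at hX
  obtain ⟨U, hU, hUX⟩ := hX
  have hfA : (fun n => @decide (n ∈ A.val) (Classical.dec _)) ∈ U := by
    rw [← hUX] at hAX; exact hAX
  rw [isOpen_pi_iff] at hU
  obtain ⟨I, u, hu, hsub⟩ := hU _ hfA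
  refine ⟨I.sup id + 1, ?_⟩
  intro B hB
  rw [← hUX]
  apply hsub
  intro i hi
  have hlt : i < I.sup id + 1 := Nat.lt_succ_of_le (Finset.le_sup (f := id) hi)
  have : @decide (i ∈ B.val) (Classical.dec _) = @decide (i ∈ A.val) (Classical.dec _) :=
    decide_eq_decide.mpr (hB i hlt)
  show @decide (i ∈ B.val) (Classical.dec _) ∈ u i
  rw [this]
  exact (hu i hi).2


/-- Fusion: inside any infinite `M₀` there is an infinite `N` such that every nonempty
finite subset `s` of `N` is either rejected by `N`, or accepted with witness the part of
`N` above `max s`. -/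
lemma fusion (X : Set BaireInf) {M₀ : Set ℕ} (hM₀ : M₀.Infinite) :
    ∃ N : Set ℕ, N ⊆ M₀ ∧ N.Infinite ∧
      ∀ s : Finset ℕ, ↑s ⊆ N → ∀ (hs : s.Nonempty),
        Rej X s N ∨ Acc X s {m ∈ N | s.max' hs < m} := by
  classical
  set Inv : Finset ℕ × Set ℕ → Prop := fun q =>
    q.2.Infinite ∧ q.2 ⊆ M₀ ∧ (∀ t ∈ q.1.powerset, t.Nonempty → (Acc X t q.2 ∨ Rej X t q.2)) with hInv
  have hstep : ∀ q : {q // Inv q}, ∃ q' : {q // Inv q},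
      q'.1.1 = insert (sInf q.1.2) q.1.1 ∧ q'.1.2 ⊆ q.1.2 ∩ Set.Ioi (sInf q.1.2) := by
    rintro ⟨⟨F, P⟩, hPinf, hPM, _hdec⟩
    have h1 : (P ∩ Set.Ioi (sInf P)).Infinite := inter_Ioi_infinite hPinf _
    obtain ⟨Q, hQsub, hQinf, hQdec⟩ := decide_finset X ((insert (sInf P) F).powerset) h1
    refine ⟨⟨(insert (sInf P) F, Q), hQinf, ?_, ?_⟩, rfl, hQsub⟩
    · exact hQsub.trans ((Set.inter_subset_left).trans hPM)
    · intro t ht _; exact hQdec t ht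
  -- initial state
  have h0 : Inv (∅, M₀) := ⟨hM₀, subset_rfl, by
    intro t ht hne
    rw [Finset.mem_powerset, Finset.subset_empty] at ht
    exact absurd (ht ▸ hne) (by simp)⟩
  let stepf : {q // Inv q} → {q // Inv q} := fun q => (hstep q).choose
  let seq : ℕ → {q // Inv q} := fun i => stepf^[i] ⟨(∅, M₀), h0⟩
  let nn : ℕ → ℕ := fun i => sInf (seq i).1.2
  have hseq_succ : ∀ i, seq (i+1) = stepf (seq i) := fun i =>
    Function.iterate_succ_apply' stepf i _
  have hF : ∀ i, (seq (i+1)).1.1 = insert (nn i) (seq i).1.1 := by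
    intro i; rw [hseq_succ i]; exact (hstep (seq i)).choose_spec.1
  have hP : ∀ i, (seq (i+1)).1.2 ⊆ (seq i).1.2 ∩ Set.Ioi (nn i) := by
    intro i; rw [hseq_succ i]; exact (hstep (seq i)).choose_spec.2
  have hnn_mem : ∀ i, nn i ∈ (seq i).1.2 := fun i => Nat.sInf_mem (seq i).2.1.nonempty
  have hPmono : ∀ i j, i ≤ j → (seq j).1.2 ⊆ (seq i).1.2 := by
    intro i j hij
    induction j, hij using Nat.le_induction with
    | base => exact subset_rfl
    | succ j hij ih => exact ((hP j).trans Set.inter_subset_left).trans ih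
  have hmem : ∀ i j, i ≤ j → nn j ∈ (seq i).1.2 := fun i j hij => hPmono i j hij (hnn_mem j)
  have hstrict : StrictMono nn := by
    apply strictMono_nat_of_lt_succ
    intro i
    exact (hP i (hnn_mem (i+1))).2
  have hF0 : (seq 0).1.1 = ∅ := rfl
  have hFeq : ∀ i, (seq i).1.1 = Finset.image nn (Finset.range i) := by
    intro i
    induction i with
    | zero => simp [hF0]
    | succ i ih => rw [hF i, ih, Finset.range_add_one, Finset.image_insert]
  set N : Set ℕ := Set.range nn with hN
  have hNM : N ⊆ M₀ := by
    rintro _ ⟨i, rfl⟩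
    exact (seq i).2.2.1 (hnn_mem i)
  have hNinf : N.Infinite := Set.infinite_range_of_injective hstrict.injective
  have htail : ∀ i, {m ∈ N | nn i < m} ⊆ (seq (i+1)).1.2 := by
    rintro i m ⟨⟨j, rfl⟩, hlt⟩
    have hij : i < j := hstrict.lt_iff_lt.mp hlt
    exact hmem (i+1) j hij
  refine ⟨N, hNM, hNinf, ?_⟩
  intro s hsN hs
  obtain ⟨i, hi⟩ := hsN (s.max'_mem hs)
  replace hi : s.max' hs = nn i := hi.symm
  have hsF : s ∈ (seq (i+1)).1.1.powerset := by
    rw [Finset.mem_powerset, hFeq]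
    intro x hx
    obtain ⟨j, hj⟩ := hsN hx
    have : x ≤ nn i := hi ▸ s.le_max' x hx
    rw [← hj] at this ⊢
    exact Finset.mem_image_of_mem nn (Finset.mem_range.mpr (Nat.lt_succ_of_le
      (hstrict.le_iff_le.mp this)))
  rcases (seq (i+1)).2.2.2 s hsF hs with h | h
  · right
    rw [hi]
    exact h.mono (htail i)
  · -- Rej s P_{i+1} ⇒ Rej s N
    left
    intro P hPN hPinf hAcc
    have h1 : (P ∩ Set.Ioi (nn i)).Infinite := inter_Ioi_infinite hPinf _
    have h2 : P ∩ Set.Ioi (nn i) ⊆ (seq (i+1)).1.2 := fun m hm =>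
      htail i ⟨hPN hm.1, hm.2⟩
    exact h _ h2 h1 (hAcc.mono Set.inter_subset_left)

/-- If `N` rejects `s`, then only finitely many one-point extensions of `s` by elements of `N`
fail to be rejected by `N`. -/
lemma bad_finite (X : Set BaireInf) {N : Set ℕ}
    (hdec : ∀ s : Finset ℕ, ↑s ⊆ N → ∀ (hs : s.Nonempty),
      Rej X s N ∨ Acc X s {m ∈ N | s.max' hs < m})
    {s : Finset ℕ} (hsN : ↑s ⊆ N) (hrej : Rej X s N) :
    {n ∈ N | s.sup id < n ∧ ¬ Rej X (insert n s) N}.Finite := by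
  classical
  by_contra hinf
  rw [← Set.not_infinite, not_not] at hinf
  set B : Set ℕ := {n ∈ N | s.sup id < n ∧ ¬ Rej X (insert n s) N} with hB
  have hBN : B ⊆ N := fun n hn => hn.1
  refine hrej B hBN hinf ?_
  intro A hA hsA hAB
  have hdiff : (A \ ↑s).Infinite := hA.diff s.finite_toSet
  set n : ℕ := sInf (A \ ↑s) with hn
  have hnmem : n ∈ A \ ↑s := Nat.sInf_mem hdiff.nonempty
  have hnB : n ∈ B := hAB hnmem
  have hsupn : s.sup id < n := hnB.2.1
  have hins : ↑(insert n s) ⊆ N := by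
    rw [Finset.coe_insert]
    exact Set.insert_subset (hBN hnB) hsN
  have hne : (insert n s).Nonempty := Finset.insert_nonempty _ _
  have hmax : (insert n s).max' hne = n := by
    apply le_antisymm
    · apply Finset.max'_le
      intro y hy
      rcases Finset.mem_insert.mp hy with rfl | hy
      · exact le_rfl
      · exact le_of_lt (lt_of_le_of_lt (Finset.le_sup (f := id) hy) hsupn)
    · exact Finset.le_max' _ n (Finset.mem_insert_self n s)
  rcases hdec (insert n s) hins hne with h | h
  · exact absurd h hnB.2.2
  · rw [hmax] at h
    refine h A hA ?_ ?_
    · rw [Finset.coe_insert]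
      exact Set.insert_subset hnmem.1 hsA
    · intro m hm
      have hmA : m ∈ A \ ↑s := ⟨hm.1, fun hms => hm.2 (by simp [Finset.coe_insert, hms])⟩
      have hge : n ≤ m := Nat.sInf_le hmA
      have hne' : m ≠ n := fun h' => hm.2 (by simp [h'])
      exact ⟨hBN (hAB hmA), lt_of_le_of_ne hge (Ne.symm hne')⟩

/-- From a fused set `N` rejecting `∅`, extract an infinite `N' ⊆ N` all of whose finite
subsets are rejected by `N`. -/
lemma pick (X : Set BaireInf) {N : Set ℕ} (hNinf : N.Infinite)
    (hdec : ∀ s : Finset ℕ, ↑s ⊆ N → ∀ (hs : s.Nonempty),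
      Rej X s N ∨ Acc X s {m ∈ N | s.max' hs < m})
    (hrej0 : Rej X ∅ N) :
    ∃ N' : Set ℕ, N' ⊆ N ∧ N'.Infinite ∧ ∀ s : Finset ℕ, ↑s ⊆ N' → Rej X s N := by
  classical
  set Inv : Finset ℕ → Prop := fun F => ↑F ⊆ N ∧ ∀ t ∈ F.powerset, Rej X t N with hInv
  have hstep : ∀ F : {F // Inv F}, ∃ F' : {F // Inv F}, ∃ n,
      F'.1 = insert n F.1 ∧ n ∈ N ∧ ∀ x ∈ F.1, x < n := by
    rintro ⟨F, hFN, hFrej⟩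
    set Bad : Set ℕ := ⋃ t ∈ F.powerset, {n ∈ N | t.sup id < n ∧ ¬ Rej X (insert n t) N}
      with hBad
    have hBadfin : Bad.Finite := by
      apply Set.Finite.biUnion (F.powerset.finite_toSet)
      intro t ht
      exact bad_finite X hdec (fun x hx => hFN ((Finset.mem_powerset.mp ht) hx)) (hFrej t ht)
    have hGood : ((N ∩ Set.Ioi (F.sup id)) \ Bad).Infinite :=
      (inter_Ioi_infinite hNinf _).diff hBadfin
    obtain ⟨n, hn⟩ := hGood.nonempty
    have hnN : n ∈ N := hn.1.1
    have hnsup : F.sup id < n := hn.1.2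
    refine ⟨⟨insert n F, ?_, ?_⟩, n, rfl, hnN, fun x hx =>
      lt_of_le_of_lt (Finset.le_sup (f := id) hx) hnsup⟩
    · rw [Finset.coe_insert]; exact Set.insert_subset hnN hFN
    · intro t ht
      rw [Finset.mem_powerset] at ht
      by_cases hnt : n ∈ t
      · have hterase : t.erase n ⊆ F := by
          intro x hx
          rcases Finset.mem_insert.mp (ht (Finset.mem_of_mem_erase hx)) with rfl | h
          · exact absurd rfl (Finset.ne_of_mem_erase hx)
          · exact h
        have hsup' : (t.erase n).sup id < n :=
          lt_of_le_of_lt (Finset.sup_mono hterase) hnsup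
        have hnotbad : n ∉ Bad := hn.2
        have : ¬ (n ∈ N ∧ (t.erase n).sup id < n ∧ ¬ Rej X (insert n (t.erase n)) N) := by
          intro hcon
          exact hnotbad (Set.mem_biUnion (Finset.mem_powerset.mpr hterase) hcon)
        push_neg at this
        have hrej' : Rej X (insert n (t.erase n)) N := (this hnN hsup')
        rwa [Finset.insert_erase hnt] at hrej'
      · exact hFrej t (Finset.mem_powerset.mpr (fun x hx => by
          rcases Finset.mem_insert.mp (ht hx) with rfl | h
          · exact absurd hx hnt
          · exact h))
  let stepf : {F // Inv F} → {F // Inv F} := fun F => (hstep F).choose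
  let aa : {F // Inv F} → ℕ := fun F => (hstep F).choose_spec.choose
  have h0 : Inv ∅ := ⟨by simp, by
    intro t ht
    rw [Finset.mem_powerset, Finset.subset_empty] at ht
    subst ht
    simpa using hrej0⟩
  let seq : ℕ → {F // Inv F} := fun i => stepf^[i] ⟨∅, h0⟩
  let a : ℕ → ℕ := fun i => aa (seq i)
  have hseq_succ : ∀ i, seq (i+1) = stepf (seq i) := fun i =>
    Function.iterate_succ_apply' stepf i _
  have hspec : ∀ i, (seq (i+1)).1 = insert (a i) (seq i).1 ∧ a i ∈ N ∧
      ∀ x ∈ (seq i).1, x < a i := by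
    intro i
    rw [hseq_succ i]
    exact (hstep (seq i)).choose_spec.choose_spec
  have hFmono : ∀ i j, i ≤ j → (seq i).1 ⊆ (seq j).1 := by
    intro i j hij
    induction j, hij using Nat.le_induction with
    | base => exact subset_rfl
    | succ j hij ih => exact ih.trans (by rw [(hspec j).1]; exact Finset.subset_insert _ _)
  have haF : ∀ i, a i ∈ (seq (i+1)).1 := by
    intro i; rw [(hspec i).1]; exact Finset.mem_insert_self _ _
  have hstrict : StrictMono a := by
    apply strictMono_nat_of_lt_succ
    intro i
    exact (hspec (i+1)).2.2 (a i) (haF i)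
  refine ⟨Set.range a, ?_, Set.infinite_range_of_injective hstrict.injective, ?_⟩
  · rintro _ ⟨i, rfl⟩; exact (hspec i).2.1
  · intro s hs
    have : ∃ i, ↑s ⊆ (seq i).1 := by
      classical
      induction s using Finset.induction_on with
      | empty => exact ⟨0, by simp⟩
      | @insert x s hxs ih =>
        obtain ⟨i, hi⟩ := ih (fun y hy => hs (by simp [hy]))
        obtain ⟨j, hj⟩ := hs (by simp : x ∈ ↑(insert x s))
        refine ⟨max (j+1) i, Finset.insert_subset
          (hFmono (j+1) _ (le_max_left _ _) (hj ▸ haF j))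
          (hi.trans (hFmono i _ (le_max_right _ _)))⟩
    obtain ⟨i, hi⟩ := this
    exact (seq i).2.2 s (Finset.mem_powerset.mpr hi)

end GPAux

/-- Galvin–Prikry for open sets: every metrically open subset of `[ℕ]^ℕ` is Ramsey. -/
theorem open_isRamsey (X : Set BaireInf) (hX : IsOpen X) :
    ∀ M : Set ℕ, M.Infinite → ∃ N ⊆ M, N.Infinite ∧
      ((∀ (A : Set ℕ) (hA : A.Infinite), A ⊆ N → (⟨A, hA⟩ : BaireInf) ∈ X) ∨
       (∀ (A : Set ℕ) (hA : A.Infinite), A ⊆ N → (⟨A, hA⟩ : BaireInf) ∉ X)) := by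
  intro M hM
  obtain ⟨M₀, hM₀M, hM₀inf, hdec0⟩ := GPAux.decide_one X ∅ hM
  rcases hdec0 with hAcc | hRej
  · refine ⟨M₀, hM₀M, hM₀inf, Or.inl ?_⟩
    intro A hA hAN
    exact hAcc A hA (by simp) (by intro x hx; exact hAN hx.1)
  · obtain ⟨N, hNM₀, hNinf, hdec⟩ := GPAux.fusion X hM₀inf
    have hrej0 : GPAux.Rej X ∅ N := hRej.mono hNM₀
    obtain ⟨N', hN'N, hN'inf, hall⟩ := GPAux.pick X hNinf hdec hrej0
    refine ⟨N', (hN'N.trans hNM₀).trans hM₀M, hN'inf, Or.inr ?_⟩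
    intro A hA hAN' hmem
    obtain ⟨n, hn⟩ := GPAux.open_nbhd hX ⟨A, hA⟩ hmem
    have hfin : (A ∩ Set.Iio n).Finite := Set.Finite.inter_of_right (Set.finite_Iio n) A
    have hts : ↑hfin.toFinset = A ∩ Set.Iio n := hfin.coe_toFinset
    set t := hfin.toFinset with ht
    have htN' : ↑t ⊆ N' := by rw [hts]; exact Set.inter_subset_left.trans hAN'
    have hrejt : GPAux.Rej X t N := hall t htN'
    set W : Set ℕ := {m ∈ N' | n ≤ m} with hW
    have hWN : W ⊆ N := fun m hm => hN'N hm.1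
    have hWinf : W.Infinite := by
      have hsub : N' \ Set.Iio n ⊆ W := fun m hm => ⟨hm.1, not_lt.mp hm.2⟩
      exact (hN'inf.diff (Set.finite_Iio n)).mono hsub
    refine hrejt W hWN hWinf ?_
    intro B hB htB hBW
    apply hn ⟨B, hB⟩
    intro k hk
    constructor
    · intro hkB
      by_cases hkt : k ∈ (t : Set ℕ)
      · rw [hts] at hkt; exact hkt.1
      · exact absurd (hBW ⟨hkB, hkt⟩).2 (not_le.mpr hk)
    · intro hkA
      exact htB (by rw [hts]; exact ⟨hkA, hk⟩)
end

section
/- Every Borel subset of the Baire space [ℕ]^ℕ is Ramsey (the Galvin–Prikry theorem). -/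
open Set

namespace GalvinPrikry

/-- Ellentuck's basic set `[s, B]`; unlike the usual convention, `s` need not lie below `B`. -/
def basicSet (s : Finset ℕ) (B : Set ℕ) : Set (Set ℕ) :=
  {C | ↑s ⊆ C ∧ C ⊆ ↑s ∪ B ∧ C.Infinite}

def above (F : Finset ℕ) (B : Set ℕ) : Set ℕ :=
  {y ∈ B | ∀ x ∈ F, x < y}

def Homogeneous (X : Set (Set ℕ)) (s : Finset ℕ) (B : Set ℕ) : Prop :=
  basicSet s B ⊆ X ∨ basicSet s B ⊆ Xᶜ

def CompletelyRamsey (X : Set (Set ℕ)) : Prop :=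
  ∀ (s : Finset ℕ) (A : Set ℕ), A.Infinite → ∃ B ⊆ A, B.Infinite ∧ Homogeneous X s B

def Rejects (X : Set (Set ℕ)) (s : Finset ℕ) (B : Set ℕ) : Prop :=
  ∀ D ⊆ B, D.Infinite → ¬ basicSet s D ⊆ X

def Decides (X : Set (Set ℕ)) (s : Finset ℕ) (B : Set ℕ) : Prop :=
  basicSet s B ⊆ X ∨ Rejects X s B

def IsCylinderOpen (X : Set (Set ℕ)) : Prop :=
  ∀ C ∈ X, ∃ n, ∀ D : Set ℕ, D.Infinite → (∀ m < n, m ∈ D ↔ m ∈ C) → D ∈ X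

theorem basicSet_mono (s : Finset ℕ) : Monotone (basicSet s) :=
  fun _ _ h _ ⟨hs, hC, hinf⟩ => ⟨hs, hC.trans (union_subset_union_right _ h), hinf⟩

theorem homogeneous_antitone (X : Set (Set ℕ)) (s : Finset ℕ) : Antitone (Homogeneous X s) :=
  fun _ _ h => Or.imp (basicSet_mono s h).trans (basicSet_mono s h).trans

theorem rejects_antitone (X : Set (Set ℕ)) (s : Finset ℕ) : Antitone (Rejects X s) :=
  fun _ _ h hr D hD => hr D (hD.trans h)

theorem decides_antitone (X : Set (Set ℕ)) (s : Finset ℕ) : Antitone (Decides X s) :=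
  fun _ _ h => Or.imp (basicSet_mono s h).trans (rejects_antitone X s h)

theorem above_mono (F : Finset ℕ) : Monotone (above F) :=
  fun _ _ h _ hy => ⟨h hy.1, hy.2⟩

theorem above_subset (F : Finset ℕ) (B : Set ℕ) : above F B ⊆ B :=
  sep_subset _ _

@[simp]
theorem above_empty (B : Set ℕ) : above ∅ B = B := by
  simp [above]

theorem infinite_above {B : Set ℕ} (hB : B.Infinite) (F : Finset ℕ) : (above F B).Infinite :=
  (hB.sdiff (finite_Iic (F.sup id))).mono fun _ hy =>
    ⟨hy.1, fun _ hx => (Finset.le_sup (f := id) hx).trans_lt (not_le.1 hy.2)⟩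

theorem mem_basicSet_union_above {s F : Finset ℕ} {B C : Set ℕ} (hC : C ∈ basicSet s B)
    (hagree : ∀ m ≤ F.sup id, m ∈ C ↔ m ∈ s ∪ F) : C ∈ basicSet (s ∪ F) (above F B) := by
  obtain ⟨hsC, hCB, hCinf⟩ := hC
  refine ⟨?_, fun x hx => ?_, hCinf⟩
  · intro x hx
    rcases Finset.mem_union.1 hx with hxs | hxF
    · exact hsC hxs
    · exact (hagree x (Finset.le_sup (f := id) hxF)).2 hx
  · by_cases hxF : x ≤ F.sup id
    · exact Or.inl ((hagree x hxF).1 hx)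
    · rcases hCB hx with hxs | hxB
      · exact Or.inl (Finset.mem_union_left _ hxs)
      · exact Or.inr ⟨hxB, fun y hy => (Finset.le_sup (f := id) hy).trans_lt (not_le.1 hxF)⟩

theorem exists_subset_forall_finset {ι : Type*} {Φ : ι → Set ℕ → Prop}
    (hanti : ∀ i, Antitone (Φ i))
    (hdense : ∀ i (A : Set ℕ), A.Infinite → ∃ B ⊆ A, B.Infinite ∧ Φ i B) (I : Finset ι)
    {A : Set ℕ} (hA : A.Infinite) : ∃ B ⊆ A, B.Infinite ∧ ∀ i ∈ I, Φ i B := by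
  classical
  induction I using Finset.induction_on with
  | empty => exact ⟨A, Subset.rfl, hA, by simp⟩
  | insert i I _ ih =>
    obtain ⟨B, hBA, hB, hBI⟩ := ih
    obtain ⟨B', hB'B, hB', hB'i⟩ := hdense i B hB
    refine ⟨B', hB'B.trans hBA, hB', fun j hj => ?_⟩
    rcases Finset.mem_insert.1 hj with rfl | hj
    · exact hB'i
    · exact hanti j hB'B (hBI j hj)

theorem exists_subset_above_forall_subset_Iic {Φ : Finset ℕ → Set ℕ → Prop}
    (hanti : ∀ F, Antitone (Φ F))
    (hdense : ∀ F (A : Set ℕ), A.Infinite → ∃ B ⊆ A, B.Infinite ∧ Φ F B)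
    {C : Set ℕ} (hC : C.Infinite) :
    ∃ C' ⊆ above {sInf C} C, C'.Infinite ∧ ∀ F ⊆ Finset.Iic (sInf C), Φ F C' := by
  obtain ⟨C', hC'C, hC', hΦ⟩ := exists_subset_forall_finset hanti hdense
    (Finset.Iic (sInf C)).powerset (infinite_above hC {sInf C})
  exact ⟨C', hC'C, hC', fun F hF => hΦ F (Finset.mem_powerset.2 hF)⟩

/-- The diagonal set is `{b₀ < b₁ < ⋯}` with `bₖ = min Cₖ₊₁` for a decreasing sequence `Cₖ`,
where `Cₖ₊₁` lies above `min Cₖ` and satisfies `Φ F` for every `F ⊆ [0, min Cₖ]`. -/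
theorem exists_diagonal {Φ : Finset ℕ → Set ℕ → Prop} (hanti : ∀ F, Antitone (Φ F))
    (hdense : ∀ F (A : Set ℕ), A.Infinite → ∃ B ⊆ A, B.Infinite ∧ Φ F B)
    {A : Set ℕ} (hA : A.Infinite) :
    ∃ B ⊆ A, B.Infinite ∧ ∀ F : Finset ℕ, ↑F ⊆ B → Φ F (above F B) := by
  choose! next hnext_sub hnext_inf hnext_Φ using
    fun (C : Set ℕ) (hC : C.Infinite) => exists_subset_above_forall_subset_Iic hanti hdense hC
  set C : ℕ → Set ℕ := fun k => next^[k] A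
  have hC_succ : ∀ k, C (k + 1) = next (C k) := fun k => Function.iterate_succ_apply' _ _ _
  have hC_inf : ∀ k, (C k).Infinite := by
    intro k
    induction k with
    | zero => exact hA
    | succ k ih => rw [hC_succ]; exact hnext_inf _ ih
  have hC_sub : ∀ k, C (k + 1) ⊆ above {sInf (C k)} (C k) := fun k =>
    hC_succ k ▸ hnext_sub _ (hC_inf k)
  have hC_anti : Antitone C :=
    antitone_nat_of_succ_le fun k => (hC_sub k).trans (above_subset _ _)
  set b : ℕ → ℕ := fun k => sInf (C (k + 1))
  have hb_mem : ∀ k, b k ∈ C (k + 1) := fun k => Nat.sInf_mem (hC_inf _).nonempty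
  have hb_mono : StrictMono b := strictMono_nat_of_lt_succ fun k =>
    (hC_sub (k + 1) (hb_mem (k + 1))).2 _ (Finset.mem_singleton_self _)
  have hb_tail : ∀ k j, k ≤ j → b j ∈ C (k + 1) := fun k j h => hC_anti (by omega) (hb_mem j)
  refine ⟨range b, ?_, infinite_range_of_injective hb_mono.injective, fun F hF => ?_⟩
  · rintro _ ⟨k, rfl⟩
    exact hC_anti (Nat.zero_le _) (hb_mem k)
  obtain ⟨k, hFk, htail⟩ : ∃ k, F ⊆ Finset.Iic (sInf (C k)) ∧ above F (range b) ⊆ C (k + 1) := by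
    rcases F.eq_empty_or_nonempty with rfl | hne
    · refine ⟨0, Finset.empty_subset _, ?_⟩
      rintro _ ⟨⟨j, rfl⟩, -⟩
      exact hb_tail 0 j (Nat.zero_le _)
    · obtain ⟨k, hk⟩ := hF (F.max'_mem hne)
      refine ⟨k + 1, fun x hx => Finset.mem_Iic.2 ?_, ?_⟩
      · change x ≤ b k
        exact hk ▸ F.le_max' x hx
      rintro _ ⟨⟨j, rfl⟩, hj⟩
      exact hb_tail (k + 1) j (hb_mono.lt_iff_lt.1 (hk ▸ hj _ (F.max'_mem hne)))
  rw [hC_succ] at htail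
  exact hanti F htail (hnext_Φ _ (hC_inf k) F hFk)

theorem exists_finset_agree {s : Finset ℕ} {B C : Set ℕ} (hC : C ∈ basicSet s B) (n : ℕ) :
    ∃ F : Finset ℕ, ↑F ⊆ B ∧ n ≤ F.sup id ∧ ∀ m ≤ F.sup id, m ∈ C ↔ m ∈ s ∪ F := by
  classical
  obtain ⟨hsC, hCB, hC⟩ := hC
  obtain ⟨k, ⟨hkC, hks⟩, hnk⟩ := (hC.sdiff s.finite_toSet).exists_gt n
  set F := (Finset.Iic k).filter (fun x => x ∈ C ∧ x ∉ s)
  have hF : ∀ x, x ∈ F ↔ x ≤ k ∧ x ∈ C ∧ x ∉ s := by simp [F]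
  have hFk : F.sup id = k :=
    le_antisymm (Finset.sup_le fun x hx => ((hF x).1 hx).1)
      (Finset.le_sup (f := id) ((hF k).2 ⟨le_rfl, hkC, hks⟩))
  refine ⟨F, fun x hx => (hCB ((hF x).1 hx).2.1).resolve_left ((hF x).1 hx).2.2,
    hFk ▸ hnk.le, fun m hm => ?_⟩
  rw [hFk] at hm
  by_cases hms : m ∈ s
  · simp [hms, hsC hms]
  · simp [hms, hF, hm]

theorem exists_subset_decides (X : Set (Set ℕ)) (s : Finset ℕ) {A : Set ℕ} (hA : A.Infinite) :
    ∃ B ⊆ A, B.Infinite ∧ Decides X s B := by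
  by_cases h : Rejects X s A
  · exact ⟨A, Subset.rfl, hA, Or.inr h⟩
  · simp only [Rejects, not_forall, not_not] at h
    obtain ⟨D, hDA, hD, hacc⟩ := h
    exact ⟨D, hDA, hD, Or.inl hacc⟩

/-- A set `C ∉ X` in `[s ∪ F, N]`, `N` the set of exceptions, lies in the accepted
`[s ∪ F ∪ {n}, B/(F ∪ {n})]` for `n = min (C \ (s ∪ F))`. -/
theorem finite_setOf_not_rejects_insert {X : Set (Set ℕ)} {s F : Finset ℕ} {B : Set ℕ}
    (hdec : ∀ G : Finset ℕ, ↑G ⊆ B → Decides X (s ∪ G) (above G B)) (hFB : ↑F ⊆ B)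
    (hrej : Rejects X (s ∪ F) (above F B)) :
    {n ∈ above F B | ¬ Rejects X (s ∪ insert n F) (above (insert n F) B)}.Finite := by
  by_contra hinf
  obtain ⟨C, ⟨hsC, hCN, hC⟩, hCX⟩ := not_subset.1 (hrej _ (sep_subset _ _) hinf)
  have hne : (C \ ↑(s ∪ F)).Nonempty := (hC.sdiff (Finset.finite_toSet _)).nonempty
  set n := sInf (C \ ↑(s ∪ F))
  have hn : n ∈ C \ ↑(s ∪ F) := Nat.sInf_mem hne
  have hnN := (hCN hn.1).resolve_left hn.2
  refine hCX (((hdec (insert n F) ?_).resolve_right hnN.2) ⟨?_, fun x hx => ?_, hC⟩)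
  · rw [Finset.coe_insert]
    exact insert_subset (above_subset _ _ hnN.1) hFB
  · rw [Finset.union_insert, Finset.coe_insert]
    exact insert_subset hn.1 hsC
  · rw [Finset.union_insert, Finset.coe_insert]
    by_cases hxsF : x ∈ (↑(s ∪ F) : Set ℕ)
    · exact Or.inl (Or.inr hxsF)
    obtain rfl | hnx := (Nat.sInf_le ⟨hx, hxsF⟩ : n ≤ x).eq_or_lt
    · exact Or.inl (Or.inl rfl)
    obtain ⟨⟨hxB, hxF⟩, -⟩ := (hCN hx).resolve_left hxsF
    refine Or.inr ⟨hxB, fun y hy => ?_⟩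
    rcases Finset.mem_insert.1 hy with rfl | hy
    exacts [hnx, hxF y hy]

theorem exists_subset_forall_rejects {X : Set (Set ℕ)} {s : Finset ℕ} {B : Set ℕ}
    (hB : B.Infinite) (hdec : ∀ G : Finset ℕ, ↑G ⊆ B → Decides X (s ∪ G) (above G B))
    (hrej : Rejects X s B) :
    ∃ B' ⊆ B, B'.Infinite ∧ ∀ F : Finset ℕ, ↑F ⊆ B' → Rejects X (s ∪ F) (above F B') := by
  classical
  set R : Finset ℕ → Prop := fun F => Rejects X (s ∪ F) (above F B)
  have hdense : ∀ F (A : Set ℕ), A.Infinite → ∃ D ⊆ A, D.Infinite ∧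
      (↑F ⊆ B → R F → ∀ n ∈ D, n ∈ above F B → R (insert n F)) := by
    intro F A hA
    by_cases hF : ↑F ⊆ B ∧ R F
    · exact ⟨_, sdiff_subset, hA.sdiff (finite_setOf_not_rejects_insert hdec hF.1 hF.2),
        fun _ _ n hn hnF => not_not.1 fun h => hn.2 ⟨hnF, h⟩⟩
    · exact ⟨A, Subset.rfl, hA, fun h h' => absurd ⟨h, h'⟩ hF⟩
  obtain ⟨B', hB'B, hB', hext⟩ := exists_diagonal
    (Φ := fun F D => ↑F ⊆ B → R F → ∀ n ∈ D, n ∈ above F B → R (insert n F))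
    (fun _ _ _ h hext hF hR n hn => hext hF hR n (h hn)) hdense hB
  refine ⟨B', hB'B, hB', fun F hF => rejects_antitone X _ (above_mono F hB'B) ?_⟩
  induction F using Finset.induction_on_max with
  | empty => simpa [R] using hrej
  | insert n F hlt ih =>
    rw [Finset.coe_insert, insert_subset_iff] at hF
    exact hext F hF.2 (hF.2.trans hB'B) (ih hF.2) n ⟨hF.1, hlt⟩ ⟨hB'B hF.1, hlt⟩

theorem basicSet_subset_compl_of_forall_rejects {X : Set (Set ℕ)} (hX : IsCylinderOpen X)
    {s : Finset ℕ} {B : Set ℕ} (hB : B.Infinite)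
    (hR : ∀ F : Finset ℕ, ↑F ⊆ B → Rejects X (s ∪ F) (above F B)) : basicSet s B ⊆ Xᶜ := by
  intro C hC hCX
  obtain ⟨n, hn⟩ := hX C hCX
  obtain ⟨F, hFB, hnF, hagree⟩ := exists_finset_agree hC n
  refine hR F hFB (above F B \ Iio n) sdiff_subset ((infinite_above hB F).sdiff (finite_Iio n))
    fun E ⟨hsE, hEs, hE⟩ => hn E hE fun m hm => ?_
  rw [hagree m (by omega)]
  exact ⟨fun hmE => (hEs hmE).resolve_right fun h => h.2 hm, fun h => hsE h⟩

theorem CompletelyRamsey.of_isCylinderOpen {X : Set (Set ℕ)} (hX : IsCylinderOpen X) :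
    CompletelyRamsey X := by
  intro s A hA
  obtain ⟨B, hBA, hB, hdec⟩ := exists_diagonal (Φ := fun F => Decides X (s ∪ F))
    (fun _ => decides_antitone X _) (fun _ _ hA => exists_subset_decides X _ hA) hA
  obtain hacc | hrej : Decides X s B := by simpa using hdec ∅ (by simp)
  · exact ⟨B, hBA, hB, Or.inl hacc⟩
  obtain ⟨B', hB'B, hB', hR⟩ := exists_subset_forall_rejects hB hdec hrej
  exact ⟨B', hB'B.trans hBA, hB', Or.inr (basicSet_subset_compl_of_forall_rejects hX hB' hR)⟩

theorem CompletelyRamsey.iUnion {X : ℕ → Set (Set ℕ)} (hX : ∀ n, CompletelyRamsey (X n)) :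
    CompletelyRamsey (⋃ n, X n) := by
  intro s A hA
  obtain ⟨B, hBA, hB, hhom⟩ := exists_diagonal
    (Φ := fun F B => ∀ n ∈ Finset.range (F.sup id + 1), Homogeneous (X n) (s ∪ F) B)
    (fun _ _ _ h hhom n hn => homogeneous_antitone _ _ h (hhom n hn))
    (fun _ _ hA => exists_subset_forall_finset (fun _ => homogeneous_antitone _ _)
      (fun n _ hA => hX n _ _ hA) _ hA) hA
  -- `O` is open, and on `[s, B]` it agrees with `⋃ n, X n` by the choice of `B`.
  set O : Set (Set ℕ) := {C | ∃ F : Finset ℕ, ↑F ⊆ B ∧ ∃ n ≤ F.sup id,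
    (∀ m ≤ F.sup id, m ∈ C ↔ m ∈ s ∪ F) ∧ basicSet (s ∪ F) (above F B) ⊆ X n}
  have hO : IsCylinderOpen O := fun C ⟨F, hFB, n, hn, hagree, hsub⟩ =>
    ⟨F.sup id + 1, fun D _ hD => ⟨F, hFB, n, hn,
      fun m hm => (hD m (Nat.lt_succ_of_le hm)).trans (hagree m hm), hsub⟩⟩
  obtain ⟨B', hB'B, hB', hO'⟩ := CompletelyRamsey.of_isCylinderOpen hO s B hB
  refine ⟨B', hB'B.trans hBA, hB', hO'.imp (fun hpos C hC => ?_) (fun hneg C hC hCX => ?_)⟩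
  · obtain ⟨F, -, n, -, hagree, hsub⟩ := hpos hC
    exact mem_iUnion.2 ⟨n, hsub (mem_basicSet_union_above (basicSet_mono s hB'B hC) hagree)⟩
  obtain ⟨n, hn⟩ := mem_iUnion.1 hCX
  obtain ⟨F, hFB, hnF, hagree⟩ := exists_finset_agree (basicSet_mono s hB'B hC) n
  have hCF := mem_basicSet_union_above (basicSet_mono s hB'B hC) hagree
  refine hneg hC ⟨F, hFB, n, hnF, hagree, ?_⟩
  exact (hhom F hFB n (Finset.mem_range.2 (by omega))).resolve_right fun h => h hCF hn

theorem CompletelyRamsey.compl {X : Set (Set ℕ)} (hX : CompletelyRamsey X) :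
    CompletelyRamsey Xᶜ := fun s A hA =>
  let ⟨B, hBA, hB, hhom⟩ := hX s A hA
  ⟨B, hBA, hB, by rw [Homogeneous, compl_compl]; exact hhom.symm⟩

theorem completelyRamsey_empty : CompletelyRamsey ∅ := fun _ A hA =>
  ⟨A, Subset.rfl, hA, Or.inr (compl_empty (α := Set ℕ) ▸ subset_univ _)⟩

theorem CompletelyRamsey.congr {X Y : Set (Set ℕ)} (hX : CompletelyRamsey X)
    (hXY : ∀ C : Set ℕ, C.Infinite → (C ∈ X ↔ C ∈ Y)) : CompletelyRamsey Y := fun s A hA =>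
  let ⟨B, hBA, hB, hhom⟩ := hX s A hA
  ⟨B, hBA, hB, hhom.imp (fun h C hC => (hXY C hC.2.2).1 (h hC))
    (fun h C hC hCY => h hC ((hXY C hC.2.2).2 hCY))⟩

def familyOf (U : Set BaireInf) : Set (Set ℕ) :=
  {A | ∃ h : A.Infinite, (⟨A, h⟩ : BaireInf) ∈ U}

theorem isCylinderOpen_familyOf {U : Set BaireInf} (hU : IsOpen U) :
    IsCylinderOpen (familyOf U) := by
  obtain ⟨V, hV, rfl⟩ := isOpen_induced_iff.1 hU
  rintro C ⟨hC, hCV⟩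
  obtain ⟨_, ⟨y, n, rfl⟩, hCy, hyV⟩ :=
    (PiNat.isTopologicalBasis_cylinders fun _ => Bool).exists_subset_of_mem_open hCV hV
  rw [← PiNat.mem_cylinder_iff_eq.1 hCy] at hyV
  exact ⟨n, fun D hD hDC => ⟨hD, hyV fun i hi => decide_eq_decide.2 (hDC i hi)⟩⟩

theorem completelyRamsey_familyOf {U : Set BaireInf}
    (hU : @MeasurableSet BaireInf (borel BaireInf) U) : CompletelyRamsey (familyOf U) := by
  induction U, hU using MeasurableSpace.generateFrom_induction with
  | hC U hU _ => exact .of_isCylinderOpen (isCylinderOpen_familyOf hU)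
  | empty => exact completelyRamsey_empty.congr fun _ _ => ⟨False.elim, fun ⟨_, h⟩ => h⟩
  | compl U _ hU =>
    exact hU.compl.congr fun _ hC =>
      ⟨fun h => ⟨hC, fun h' => h ⟨hC, h'⟩⟩, fun ⟨_, h⟩ ⟨_, h'⟩ => h h'⟩
  | iUnion U _ hU =>
    refine (CompletelyRamsey.iUnion hU).congr fun _ _ => ⟨fun h => ?_, fun ⟨hC, h⟩ => ?_⟩
    · obtain ⟨n, hC, h⟩ := mem_iUnion.1 h
      exact ⟨hC, mem_iUnion.2 ⟨n, h⟩⟩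
    · obtain ⟨n, h⟩ := mem_iUnion.1 h
      exact mem_iUnion.2 ⟨n, hC, h⟩

end GalvinPrikry

/-- The Galvin–Prikry theorem: every Borel subset of the Baire space `[ℕ]^ℕ` is Ramsey. -/
theorem galvin_prikry (X : Set BaireInf) (hX : @MeasurableSet BaireInf (borel BaireInf) X) :
    ∀ M : Set ℕ, M.Infinite → ∃ N ⊆ M, N.Infinite ∧
      ((∀ (A : Set ℕ) (hA : A.Infinite), A ⊆ N → (⟨A, hA⟩ : BaireInf) ∈ X) ∨
       (∀ (A : Set ℕ) (hA : A.Infinite), A ⊆ N → (⟨A, hA⟩ : BaireInf) ∉ X)) := by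
  intro M hM
  obtain ⟨N, hNM, hN, hhom⟩ := GalvinPrikry.completelyRamsey_familyOf hX ∅ M hM
  have hbasic : ∀ A, A.Infinite → A ⊆ N → A ∈ GalvinPrikry.basicSet ∅ N := fun A hA hAN =>
    ⟨by simp, by simpa using hAN, hA⟩
  refine ⟨N, hNM, hN, hhom.imp (fun h A hA hAN => ?_) fun h A hA hAN hAX =>
    h (hbasic A hA hAN) ⟨hA, hAX⟩⟩
  obtain ⟨_, hAX⟩ := h (hbasic A hA hAN)
  exact hAX
end

section
/- If a Nash-Williams family F of finite subsets of ℕ is given, then for every infinite M ⊆ ℕ there is an infinite N ⊆ M such that either no finite initial segment of any infinite subset of N belongs to F, or every infinite subset of N has an initial segment in F restricted to N (Nash-Williams theorem in the form: every clopen subset of [ℕ]^ℕ is Ramsey). -/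
/-- `s` is an initial segment of the finite set `t` (in increasing enumeration). -/
def FinInitSeg (s t : Finset ℕ) : Prop :=
  s ⊆ t ∧ ∀ a ∈ s, ∀ b ∈ t, b ∉ s → a < b

/-- `s` is a (finite) initial segment of the set `X ⊆ ℕ`. -/
def InitSegOf (s : Finset ℕ) (X : Set ℕ) : Prop :=
  ↑s ⊆ X ∧ ∀ a ∈ s, ∀ b ∈ X, b ∉ s → a < b

/-- A family of finite subsets of `ℕ` has the Nash-Williams property if no member is a
proper initial segment of another member. -/
def NashWilliams (F : Set (Finset ℕ)) : Prop :=
  ∀ s ∈ F, ∀ t ∈ F, FinInitSeg s t → s = t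

/-- `A` accepts `s`: every infinite subset of `A` has an initial segment `t` with `s ∪ t ∈ F`. -/
def Accepts (F : Set (Finset ℕ)) (s : Finset ℕ) (A : Set ℕ) : Prop :=
  ∀ X, X ⊆ A → X.Infinite → ∃ t, InitSegOf t X ∧ s ∪ t ∈ F

/-- `A` rejects `s`: no infinite subset of `A` accepts `s`. -/
def Rejects (F : Set (Finset ℕ)) (s : Finset ℕ) (A : Set ℕ) : Prop :=
  ∀ C, C ⊆ A → C.Infinite → ¬ Accepts F s C

lemma accepts_mono {F s} {A B : Set ℕ} (h : B ⊆ A) (ha : Accepts F s A) : Accepts F s B :=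
  fun X hX => ha X (hX.trans h)

lemma rejects_mono {F s} {A B : Set ℕ} (h : B ⊆ A) (hr : Rejects F s A) : Rejects F s B :=
  fun C hC => hr C (hC.trans h)

lemma exists_decide (F : Set (Finset ℕ)) (s : Finset ℕ) (A : Set ℕ) (hA : A.Infinite) :
    ∃ B, B ⊆ A ∧ B.Infinite ∧ (Accepts F s B ∨ Rejects F s B) := by
  by_cases h : ∃ C, C ⊆ A ∧ C.Infinite ∧ Accepts F s C
  · obtain ⟨C, h1, h2, h3⟩ := h
    exact ⟨C, h1, h2, Or.inl h3⟩
  · push_neg at h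
    exact ⟨A, subset_rfl, hA, Or.inr (fun C hC hCinf => h C hC hCinf)⟩

/-- Key claim: if `A` rejects `s`, there is an infinite `B ⊆ A` rejecting `insert n s`
for every `n ∈ B`. -/
lemma exists_reject_extend (F : Set (Finset ℕ)) (s : Finset ℕ) (A : Set ℕ)
    (hA : A.Infinite) (hrej : Rejects F s A) :
    ∃ B, B ⊆ A ∧ B.Infinite ∧ ∀ n ∈ B, Rejects F (insert n s) B := by
  have hstep : ∀ C : Set ℕ, C.Infinite → ∃ D, D ⊆ C ∧ D.Infinite ∧
      (∀ x ∈ D, sInf C < x) ∧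
      (Accepts F (insert (sInf C) s) D ∨ Rejects F (insert (sInf C) s) D) := by
    intro C hC
    obtain ⟨D, hDsub, hDinf, hdec⟩ :=
      exists_decide F (insert (sInf C) s) (C \ Set.Iic (sInf C)) (hC.diff (Set.finite_Iic _))
    refine ⟨D, fun x hx => (hDsub hx).1, hDinf, fun x hx => ?_, hdec⟩
    exact lt_of_not_ge (hDsub hx).2
  choose! D h1 h2 h3 h4 using hstep
  set seq : ℕ → Set ℕ := fun k => D^[k] A with hseq
  have hseq0 : seq 0 = A := rfl
  have hseqS : ∀ k, seq (k + 1) = D (seq k) := by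
    intro k; simp [hseq, Function.iterate_succ_apply']
  have hinf : ∀ k, (seq k).Infinite := by
    intro k; induction k with
    | zero => exact hA
    | succ k ih => rw [hseqS]; exact h2 _ ih
  have hsub : ∀ k, seq (k + 1) ⊆ seq k := by
    intro k; rw [hseqS]; exact h1 _ (hinf k)
  have hchain : ∀ j k, j ≤ k → seq k ⊆ seq j := by
    intro j k hjk
    induction k with
    | zero => exact (Nat.le_zero.mp hjk) ▸ subset_rfl
    | succ k ih =>
      rcases Nat.lt_or_ge j (k+1) with h | h
      · exact (hsub k).trans (ih (Nat.lt_succ_iff.mp h))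
      · have : j = k + 1 := le_antisymm hjk h
        subst this; rfl
  set n : ℕ → ℕ := fun k => sInf (seq k) with hn
  have hnmem : ∀ k, n k ∈ seq k := fun k => Nat.sInf_mem (hinf k).nonempty
  have hnlt : ∀ k, n k < n (k + 1) := by
    intro k
    have := hnmem (k + 1)
    rw [hseqS] at this
    exact h3 _ (hinf k) _ this
  have hnsm : StrictMono n := strictMono_nat_of_lt_succ hnlt
  have hdec : ∀ k, Accepts F (insert (n k) s) (seq (k+1)) ∨
      Rejects F (insert (n k) s) (seq (k+1)) := by
    intro k; rw [hseqS]; exact h4 _ (hinf k)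
  have hsub0 : ∀ k, seq k ⊆ A := fun k => hchain 0 k (Nat.zero_le k)
  by_cases hGood : {k | Accepts F (insert (n k) s) (seq (k+1))}.Infinite
  · exfalso
    set Good := {k | Accepts F (insert (n k) s) (seq (k+1))} with hG
    have hB'sub : n '' Good ⊆ A := by
      rintro _ ⟨k, -, rfl⟩; exact hsub0 k (hnmem k)
    have hB'inf : (n '' Good).Infinite := hGood.image (hnsm.injective.injOn)
    refine hrej _ hB'sub hB'inf ?_
    intro X hXB hXinf
    set m := sInf X with hm
    have hmX : m ∈ X := Nat.sInf_mem hXinf.nonempty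
    obtain ⟨k, hkG, hkm⟩ := hXB hmX
    have hX' : X \ {m} ⊆ seq (k + 1) := by
      intro x hx
      obtain ⟨j, hjG, hjx⟩ := hXB hx.1
      have hxm : m < x := lt_of_le_of_ne (Nat.sInf_le hx.1) (fun h => hx.2 h.symm)
      have : k < j := by
        rw [← hnsm.lt_iff_lt]
        rw [hkm, hjx]; exact hxm
      rw [← hjx]
      exact hchain (k+1) j this (hnmem j)
    have hX'inf : (X \ {m}).Infinite := hXinf.diff (Set.finite_singleton m)
    obtain ⟨t, hseg, hmem⟩ := hkG (X \ {m}) hX' hX'inf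
    refine ⟨insert m t, ⟨?_, ?_⟩, ?_⟩
    · intro x hx
      rcases Finset.mem_insert.mp (by exact_mod_cast hx) with h | h
      · subst h; exact hmX
      · exact (hseg.1 (by exact_mod_cast h)).1
    · intro a ha b hb hbn
      rcases Finset.mem_insert.mp ha with h | h
      · subst h
        exact lt_of_le_of_ne (Nat.sInf_le hb) (fun h => hbn (by simp [h]))
      · refine hseg.2 a h b ⟨hb, fun hbm => hbn (by simp [Set.mem_singleton_iff.mp hbm])⟩
          (fun ht => hbn (Finset.mem_insert_of_mem ht))
    · have : s ∪ insert m t = insert (n k) s ∪ t := by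
        rw [hkm, Finset.union_insert, Finset.insert_union]
      rw [this]; exact hmem
  · rw [Set.not_infinite] at hGood
    obtain ⟨K, hK⟩ := hGood.bddAbove
    set B := n '' {k | K + 1 ≤ k} with hB
    have hrejk : ∀ k, K + 1 ≤ k → Rejects F (insert (n k) s) (seq (k+1)) := by
      intro k hk
      rcases hdec k with h | h
      · exact absurd (hK h) (by omega)
      · exact h
    refine ⟨B, ?_, ?_, ?_⟩
    · rintro _ ⟨k, -, rfl⟩; exact hsub0 k (hnmem k)
    · exact (Set.Ici K.succ : Set ℕ).infinite_of_not_bddAbove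
        (by simpa using not_bddAbove_Ici (K+1)) |>.image (hnsm.injective.injOn)
    · rintro _ ⟨k, hk, rfl⟩
      intro C hCB hCinf hacc
      have hC' : C \ Set.Iic (n k) ⊆ seq (k + 1) := by
        intro x hx
        obtain ⟨j, hj, hjx⟩ := hCB hx.1
        have hxk : n k < x := lt_of_not_ge hx.2
        have : k < j := by rw [← hnsm.lt_iff_lt, hjx]; exact hxk
        rw [← hjx]; exact hchain (k+1) j this (hnmem j)
      exact hrejk k hk _ hC' (hCinf.diff (Set.finite_Iic _))
        (accepts_mono Set.diff_subset hacc)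

lemma exists_reject_extend_multi (F : Set (Finset ℕ)) (S : Finset (Finset ℕ)) :
    ∀ A : Set ℕ, A.Infinite → (∀ s ∈ S, Rejects F s A) →
    ∃ B, B ⊆ A ∧ B.Infinite ∧ (∀ s ∈ S, Rejects F s B) ∧
      (∀ s ∈ S, ∀ n ∈ B, Rejects F (insert n s) B) := by
  induction S using Finset.induction with
  | empty =>
    intro A hA _
    exact ⟨A, subset_rfl, hA, by simp, by simp⟩
  | @insert a S ha IH =>
    intro A hA hrej
    obtain ⟨B1, hB1A, hB1inf, hB1rej, hB1ext⟩ :=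
      IH A hA (fun s hs => hrej s (Finset.mem_insert_of_mem hs))
    obtain ⟨B, hBB1, hBinf, hBext⟩ :=
      exists_reject_extend F a B1 hB1inf
        (rejects_mono hB1A (hrej a (Finset.mem_insert_self a S)))
    refine ⟨B, hBB1.trans hB1A, hBinf, ?_, ?_⟩
    · intro s hs
      rcases Finset.mem_insert.mp hs with h | h
      · subst h; exact rejects_mono (hBB1.trans hB1A) (hrej s (Finset.mem_insert_self s S))
      · exact rejects_mono hBB1 (hB1rej s h)
    · intro s hs nn hnn
      rcases Finset.mem_insert.mp hs with h | h
      · subst h; exact hBext nn hnn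
      · exact rejects_mono hBB1 (hB1ext s h nn (hBB1 hnn))

/-- Fusion: if `A` rejects `∅`, there is an infinite `N ⊆ A` no finite subset of which is in `F`. -/
lemma fusion (F : Set (Finset ℕ)) (A : Set ℕ) (hA : A.Infinite) (hrej : Rejects F ∅ A) :
    ∃ N, N ⊆ A ∧ N.Infinite ∧ ∀ s ∈ F, ¬ (↑s : Set ℕ) ⊆ N := by
  classical
  set Inv : Set ℕ × Finset ℕ → Prop := fun p =>
    p.1.Infinite ∧ p.1 ⊆ A ∧ ↑p.2 ⊆ A ∧ (∀ s ⊆ p.2, Rejects F s p.1) ∧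
      (∀ x ∈ p.1, ∀ m ∈ p.2, m < x) with hInv
  have hstep : ∀ p : Set ℕ × Finset ℕ, Inv p → ∃ q : Set ℕ × Finset ℕ, Inv q ∧
      q.1 ⊆ p.1 ∧ ∃ nn ∈ p.1, q.2 = insert nn p.2 ∧ nn ∉ p.2 := by
    rintro p ⟨hinf, hAM, hpM, hrejp, hord⟩
    obtain ⟨B, hBA, hBinf, hBrej, hBext⟩ :=
      exists_reject_extend_multi F p.2.powerset p.1 hinf
        (fun s hs => hrejp s (Finset.mem_powerset.mp hs))
    set nn := sInf B with hnn
    have hnB : nn ∈ B := Nat.sInf_mem hBinf.nonempty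
    have hnp : nn ∉ p.2 := fun h => lt_irrefl nn (hord nn (hBA hnB) nn h)
    refine ⟨(B \ Set.Iic nn, insert nn p.2), ⟨?_, ?_, ?_, ?_, ?_⟩, ?_, nn, hBA hnB, rfl, hnp⟩
    · exact hBinf.diff (Set.finite_Iic _)
    · exact (Set.diff_subset.trans hBA).trans hAM
    · intro x hx
      rcases Finset.mem_insert.mp (by exact_mod_cast hx) with h | h
      · subst h; exact hAM (hBA hnB)
      · exact hpM (by exact_mod_cast h)
    · intro s hs
      by_cases hns : nn ∈ s
      · have h1 : s.erase nn ⊆ p.2 := Finset.subset_insert_iff.mp hs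
        have := hBext (s.erase nn) (Finset.mem_powerset.mpr h1) nn hnB
        rw [Finset.insert_erase hns] at this
        exact rejects_mono Set.diff_subset this
      · have h1 : s ⊆ p.2 := by
          intro x hx
          rcases Finset.mem_insert.mp (hs hx) with h | h
          · exact absurd (h ▸ hx) hns
          · exact h
        exact rejects_mono Set.diff_subset (hBrej s (Finset.mem_powerset.mpr h1))
    · intro x hx m hm
      rcases Finset.mem_insert.mp hm with h | h
      · subst h; exact lt_of_not_ge hx.2
      · exact hord x (hBA hx.1) m h
    · exact Set.diff_subset.trans hBA
  choose! g hg1 hg2 hg3 using hstep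
  set sq : ℕ → Set ℕ × Finset ℕ := fun k => g^[k] (A, ∅) with hsq
  have hsqS : ∀ k, sq (k + 1) = g (sq k) := by
    intro k; simp [hsq, Function.iterate_succ_apply']
  have hInv0 : Inv (A, ∅) := by
    refine ⟨hA, subset_rfl, by simp, ?_, by simp⟩
    intro s hs
    rw [Finset.subset_empty.mp hs]
    exact hrej
  have hInvk : ∀ k, Inv (sq k) := by
    intro k; induction k with
    | zero => exact hInv0
    | succ k ih => rw [hsqS]; exact hg1 _ ih
  have hAsub : ∀ k, (sq (k+1)).1 ⊆ (sq k).1 := by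
    intro k; rw [hsqS]; exact hg2 _ (hInvk k)
  have hAchain : ∀ j k, j ≤ k → (sq k).1 ⊆ (sq j).1 := by
    intro j k hjk
    induction k with
    | zero => exact (Nat.le_zero.mp hjk) ▸ subset_rfl
    | succ k ih =>
      rcases Nat.lt_or_ge j (k+1) with h | h
      · exact (hAsub k).trans (ih (Nat.lt_succ_iff.mp h))
      · exact (le_antisymm hjk h) ▸ subset_rfl
  have hspec : ∀ k, ∃ nn ∈ (sq k).1, (sq (k+1)).2 = insert nn (sq k).2 ∧ nn ∉ (sq k).2 := by
    intro k; rw [hsqS]; exact hg3 _ (hInvk k)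
  have hpsub : ∀ k, (sq k).2 ⊆ (sq (k+1)).2 := by
    intro k
    obtain ⟨nn, -, heq, -⟩ := hspec k
    rw [heq]
    exact Finset.subset_insert _ _
  have hpchain : ∀ j k, j ≤ k → (sq j).2 ⊆ (sq k).2 := by
    intro j k hjk
    induction k with
    | zero => exact (Nat.le_zero.mp hjk) ▸ subset_rfl
    | succ k ih =>
      rcases Nat.lt_or_ge j (k+1) with h | h
      · exact (ih (Nat.lt_succ_iff.mp h)).trans (hpsub k)
      · exact (le_antisymm hjk h) ▸ subset_rfl
  have hcard : ∀ k, ((sq k).2).card = k := by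
    intro k
    induction k with
    | zero => rfl
    | succ k ih =>
      obtain ⟨nn, -, heq, hnn⟩ := hspec k
      rw [heq, Finset.card_insert_of_notMem hnn, ih]
  set N : Set ℕ := {x | ∃ k, x ∈ (sq k).2} with hN
  have hNA : N ⊆ A := by
    rintro x ⟨k, hk⟩
    exact (hInvk k).2.2.1 (by exact_mod_cast hk)
  have hNinf : N.Infinite := by
    by_contra h
    rw [Set.not_infinite] at h
    have hsubN : (sq (h.toFinset.card + 1)).2 ⊆ h.toFinset := by
      intro x hx
      exact h.mem_toFinset.mpr ⟨_, hx⟩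
    have := Finset.card_le_card hsubN
    rw [hcard] at this
    omega
  have htail : ∀ j k x, x ∈ (sq j).2 → x ∉ (sq k).2 → x ∈ (sq k).1 := by
    intro j
    induction j with
    | zero => intro k x hx _; exact absurd hx (by simp [hsq])
    | succ j ih =>
      intro k x hx hxk
      obtain ⟨nn, hnnA, heq, -⟩ := hspec j
      rw [heq, Finset.mem_insert] at hx
      rcases hx with h | h
      · subst h
        rcases Nat.lt_or_ge j k with hlt | hge
        · exact absurd (hpchain (j+1) k hlt (heq ▸ Finset.mem_insert_self _ _)) hxk
        · exact hAchain k j hge hnnA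
      · exact ih k x h hxk
  refine ⟨N, hNA, hNinf, ?_⟩
  intro s hsF hsN
  have hexk : ∀ t : Finset ℕ, (↑t : Set ℕ) ⊆ N → ∃ k, t ⊆ (sq k).2 := by
    intro t
    induction t using Finset.induction with
    | empty => intro _; exact ⟨0, by simp [hsq]⟩
    | @insert a t ha ih =>
      intro hins
      obtain ⟨k1, hk1⟩ := ih (fun x hx => hins (by
        simp only [Finset.coe_insert, Set.mem_insert_iff]
        exact Or.inr hx))
      obtain ⟨k2, hk2⟩ := hins (show a ∈ (↑(insert a t) : Set ℕ) by simp)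
      refine ⟨max k1 k2, fun x hx => ?_⟩
      rcases Finset.mem_insert.mp hx with h | h
      · exact hpchain k2 _ (le_max_right _ _) (h ▸ hk2)
      · exact hpchain k1 _ (le_max_left _ _) (hk1 h)
  obtain ⟨k, hk⟩ := hexk s hsN
  have hrejs : Rejects F s (sq k).1 := (hInvk k).2.2.2.1 s hk
  have hT : N \ ↑((sq k).2) ⊆ (sq k).1 := by
    rintro x ⟨⟨j, hj⟩, hx2⟩
    exact htail j k x hj (by exact_mod_cast hx2)
  have hTinf : (N \ ↑((sq k).2)).Infinite := hNinf.diff ((sq k).2.finite_toSet)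
  refine hrejs _ hT hTinf ?_
  intro X hX hXinf
  refine ⟨∅, ⟨by simp, by simp⟩, by simpa using hsF⟩

/-- The Nash-Williams theorem: given a Nash-Williams family `F` of finite subsets of `ℕ`,
every infinite `M ⊆ ℕ` has an infinite subset `N` such that either no initial segment of any
infinite subset of `N` lies in `F`, or every infinite subset of `N` has an initial segment
in `F`. -/
theorem nash_williams (F : Set (Finset ℕ)) (hF : NashWilliams F) :
    ∀ M : Set ℕ, M.Infinite → ∃ N ⊆ M, N.Infinite ∧
      ((∀ X : Set ℕ, X ⊆ N → X.Infinite → ∀ s ∈ F, ¬ InitSegOf s X) ∨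
       (∀ X : Set ℕ, X ⊆ N → X.Infinite → ∃ s ∈ F, InitSegOf s X)) := by
  intro M hM
  obtain ⟨A, hAM, hAinf, hdec⟩ := exists_decide F ∅ M hM
  rcases hdec with hacc | hrej
  · refine ⟨A, hAM, hAinf, Or.inr ?_⟩
    intro X hX hXinf
    obtain ⟨t, hseg, hmem⟩ := hacc X hX hXinf
    exact ⟨t, by simpa using hmem, hseg⟩
  · obtain ⟨N, hNA, hNinf, hNrej⟩ := fusion F A hAinf hrej
    refine ⟨N, hNA.trans hAM, hNinf, Or.inl ?_⟩
    intro X hX hXinf s hs hseg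
    exact hNrej s hs (hseg.1.trans hX)
end

section
/- The collection of completely Ramsey subsets of the Baire space is closed under countable unions: if X_n ⊆ [ℕ]^ℕ is completely Ramsey for each n ∈ ℕ, then ⋃_n X_n is completely Ramsey. -/
/-- `X` (a collection of subsets of `ℕ`, thought of as infinite sets) is completely Ramsey:
for every finite `a ⊆ ℕ` and infinite `M ⊆ ℕ` with every element of `a` below every element
of `M`, there is an infinite `N ⊆ M` such that either every infinite set of the form
`a ∪ B` with `B ⊆ N` infinite lies in `X`, or no such set lies in `X`. -/
def CompletelyRamsey (X : Set (Set ℕ)) : Prop :=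
  ∀ (a : Finset ℕ) (M : Set ℕ), M.Infinite → (∀ x ∈ a, ∀ y ∈ M, x < y) →
    ∃ N ⊆ M, N.Infinite ∧
      ((∀ B ⊆ N, B.Infinite → (↑a ∪ B : Set ℕ) ∈ X) ∨
       (∀ B ⊆ N, B.Infinite → (↑a ∪ B : Set ℕ) ∉ X))

/-- `c` (an extension of the fixed stem `a`) is *good* for reservoir `P` if every infinite
subset of `P` together with `a ∪ c` lands in the union `⋃ n, X n`. -/
def GoodF (X : ℕ → Set (Set ℕ)) (a c : Finset ℕ) (P : Set ℕ) : Prop :=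
  ∀ B ⊆ P, B.Infinite → ((↑a : Set ℕ) ∪ ↑c ∪ B) ∈ ⋃ n, X n

/-- `c` is *bad* for `P` if it is good for no infinite subset of `P`. -/
def BadF (X : ℕ → Set (Set ℕ)) (a c : Finset ℕ) (P : Set ℕ) : Prop :=
  ∀ Q ⊆ P, Q.Infinite → ¬ GoodF X a c Q

lemma goodF_mono {X : ℕ → Set (Set ℕ)} {a c : Finset ℕ} {P Q : Set ℕ}
    (h : GoodF X a c P) (hQ : Q ⊆ P) : GoodF X a c Q :=
  fun B hB => h B (hB.trans hQ)

lemma badF_mono {X : ℕ → Set (Set ℕ)} {a c : Finset ℕ} {P Q : Set ℕ}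
    (h : BadF X a c P) (hQ : Q ⊆ P) : BadF X a c Q :=
  fun T hT => h T (hT.trans hQ)

lemma dichF (X : ℕ → Set (Set ℕ)) (a c : Finset ℕ) (S : Set ℕ) (hS : S.Infinite) :
    ∃ T, T ⊆ S ∧ T.Infinite ∧ (GoodF X a c T ∨ BadF X a c T) := by
  by_cases h : BadF X a c S
  · exact ⟨S, subset_rfl, hS, Or.inr h⟩
  · unfold BadF at h
    push_neg at h
    obtain ⟨T, hTS, hTinf, hG⟩ := h
    exact ⟨T, hTS, hTinf, Or.inl hG⟩

/-- Key Galvin–Prikry lemma: if `c` is bad for `P`, we can shrink `P` to `P'` so that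
every one-point extension of `c` by an element of `P'` is bad for `P'`. -/
lemma KLF (X : ℕ → Set (Set ℕ)) (a c : Finset ℕ) (P : Set ℕ) (hP : P.Infinite)
    (hbad : BadF X a c P) :
    ∃ P', P' ⊆ P ∧ P'.Infinite ∧ ∀ x ∈ P', BadF X a (insert x c) P' := by
  classical
  have hstep : ∀ s : ℕ × Set ℕ, s.2 ⊆ P → s.2.Infinite →
      ∃ t : ℕ × Set ℕ, t.1 ∈ s.2 ∧ t.2 ⊆ s.2 ∧ t.2.Infinite ∧ (∀ z ∈ t.2, t.1 < z) ∧
        (GoodF X a (insert t.1 c) t.2 ∨ BadF X a (insert t.1 c) t.2) := by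
    rintro ⟨_, S⟩ hSP hS
    obtain ⟨w, hw⟩ := hS.nonempty
    have hS' : (S \ Set.Iic w).Infinite := hS.diff (Set.finite_Iic w)
    obtain ⟨T, hTS, hTinf, hdec⟩ := dichF X a (insert w c) (S \ Set.Iic w) hS'
    refine ⟨(w, T), hw, fun z hz => (hTS hz).1, hTinf, fun z hz => ?_, hdec⟩
    have := (hTS hz).2
    simpa using this
  let St := {s : ℕ × Set ℕ // s.2 ⊆ P ∧ s.2.Infinite}
  let f : St → St := fun s =>
    ⟨(hstep s.1 s.2.1 s.2.2).choose,
      ((hstep s.1 s.2.1 s.2.2).choose_spec.2.1.trans s.2.1),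
      (hstep s.1 s.2.1 s.2.2).choose_spec.2.2.1⟩
  have hf : ∀ s : St, (f s).1.1 ∈ s.1.2 ∧ (f s).1.2 ⊆ s.1.2 ∧
      (∀ z ∈ (f s).1.2, (f s).1.1 < z) ∧
      (GoodF X a (insert (f s).1.1 c) (f s).1.2 ∨ BadF X a (insert (f s).1.1 c) (f s).1.2) :=
    fun s => ⟨(hstep s.1 s.2.1 s.2.2).choose_spec.1,
      (hstep s.1 s.2.1 s.2.2).choose_spec.2.1,
      (hstep s.1 s.2.1 s.2.2).choose_spec.2.2.2.1,
      (hstep s.1 s.2.1 s.2.2).choose_spec.2.2.2.2⟩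
  let s0 : St := ⟨(0, P), subset_rfl, hP⟩
  let seq : ℕ → St := fun i => f^[i + 1] s0
  have hseq_succ : ∀ i, seq (i + 1) = f (seq i) := by
    intro i
    show f^[i + 1 + 1] s0 = f (f^[i + 1] s0)
    rw [Function.iterate_succ_apply']
  let x : ℕ → ℕ := fun i => (seq i).1.1
  let Q : ℕ → Set ℕ := fun i => (seq i).1.2
  have hQP : ∀ i, Q i ⊆ P := fun i => (seq i).2.1
  have hxQ : ∀ i, ∀ z ∈ Q i, x i < z := by
    intro i
    cases i with
    | zero => exact (hf s0).2.2.1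
    | succ n =>
      have h := (hf (seq n)).2.2.1
      rw [← hseq_succ n] at h
      exact h
  have hdec : ∀ i, GoodF X a (insert (x i) c) (Q i) ∨ BadF X a (insert (x i) c) (Q i) := by
    intro i
    cases i with
    | zero => exact (hf s0).2.2.2
    | succ n =>
      have h := (hf (seq n)).2.2.2
      rw [← hseq_succ n] at h
      exact h
  have hxmem : ∀ i, x (i + 1) ∈ Q i := by
    intro i
    have h := (hf (seq i)).1
    rw [← hseq_succ i] at h
    exact h
  have hQmono : ∀ i, Q (i + 1) ⊆ Q i := by
    intro i
    have h := (hf (seq i)).2.1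
    rw [← hseq_succ i] at h
    exact h
  have hQanti : ∀ {i j : ℕ}, i ≤ j → Q j ⊆ Q i := by
    intro i j hij
    induction j with
    | zero =>
      have : i = 0 := Nat.le_zero.mp hij
      subst this; exact subset_rfl
    | succ n ih =>
      rcases Nat.lt_or_ge i (n + 1) with h | h
      · exact (hQmono n).trans (ih (Nat.lt_succ_iff.mp h))
      · have : i = n + 1 := le_antisymm hij h
        subst this; exact subset_rfl
  have hxlt : StrictMono x := by
    apply strictMono_nat_of_lt_succ
    intro i
    exact hxQ i _ (hxmem i)
  have hxQ' : ∀ {i j : ℕ}, i < j → x j ∈ Q i := by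
    intro i j hij
    have h1 : x j ∈ Q (j - 1) := by
      have h := hxmem (j - 1)
      have hj : j - 1 + 1 = j := by omega
      rwa [hj] at h
    exact hQanti (by omega) h1
  have hxP : ∀ i, x i ∈ P := by
    intro i
    cases i with
    | zero => exact (hf s0).1
    | succ n => exact hQP n (hxmem n)
  set I : Set ℕ := {i | BadF X a (insert (x i) c) (Q i)} with hI
  by_cases hIinf : I.Infinite
  · refine ⟨x '' I, ?_, ?_, ?_⟩
    · rintro _ ⟨i, _, rfl⟩; exact hxP i
    · exact hIinf.image (hxlt.injective.injOn)
    · rintro _ ⟨i, hiI, rfl⟩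
      intro T hT hTinf hGood
      have hT' : (T \ Set.Iic (x i)).Infinite := hTinf.diff (Set.finite_Iic _)
      have hTQ : T \ Set.Iic (x i) ⊆ Q i := by
        rintro z ⟨hzT, hz⟩
        obtain ⟨j, _, rfl⟩ := hT hzT
        have hij : i < j := hxlt.lt_iff_lt.mp (by simpa using hz)
        exact hxQ' hij
      exact hiI _ hTQ hT' (goodF_mono hGood Set.diff_subset)
  · exfalso
    have hJinf : {i | GoodF X a (insert (x i) c) (Q i)}.Infinite := by
      by_contra h
      rw [Set.not_infinite] at h
      have huniv : I ∪ {i | GoodF X a (insert (x i) c) (Q i)} = Set.univ := by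
        ext i
        simp only [Set.mem_union, Set.mem_univ, iff_true]
        rcases hdec i with h' | h'
        · exact Or.inr h'
        · exact Or.inl h'
      have hfin : (Set.univ : Set ℕ).Finite := by
        rw [← huniv]
        exact (Set.not_infinite.mp hIinf).union h
      exact Set.infinite_univ hfin
    set J := {i | GoodF X a (insert (x i) c) (Q i)} with hJdef
    refine hbad (x '' J) ?_ (hJinf.image (hxlt.injective.injOn)) ?_
    · rintro _ ⟨i, _, rfl⟩; exact hxP i
    · intro B hB hBinf
      have hBne : B.Nonempty := hBinf.nonempty
      have hm : sInf B ∈ B := Nat.sInf_mem hBne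
      obtain ⟨i, hiJ, hxi⟩ := hB hm
      have hB' : (B \ {sInf B}).Infinite := hBinf.diff (Set.finite_singleton _)
      have hB'Q : B \ {sInf B} ⊆ Q i := by
        rintro z ⟨hzB, hz⟩
        have h1 : sInf B ≤ z := Nat.sInf_le hzB
        have h2 : sInf B < z := lt_of_le_of_ne h1 (by simpa [eq_comm] using hz)
        obtain ⟨j, _, rfl⟩ := hB hzB
        have hij : i < j := hxlt.lt_iff_lt.mp (by rw [hxi]; exact h2)
        exact hxQ' hij
      have hmem := hiJ (B \ {sInf B}) hB'Q hB'
      have heq : (↑a : Set ℕ) ∪ ↑(insert (x i) c) ∪ (B \ {sInf B}) = ↑a ∪ ↑c ∪ B := by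
        rw [hxi]
        ext z
        simp only [Set.mem_union, Finset.coe_insert, Set.mem_insert_iff, Set.mem_diff,
          Set.mem_singleton_iff, Finset.mem_coe]
        constructor
        · rintro ((h | (h | h)) | ⟨h, _⟩)
          · exact Or.inl (Or.inl h)
          · subst h; exact Or.inr hm
          · exact Or.inl (Or.inr h)
          · exact Or.inr h
        · rintro ((h | h) | h)
          · exact Or.inl (Or.inl h)
          · exact Or.inl (Or.inr (Or.inr h))
          · by_cases hzm : z = sInf B
            · exact Or.inl (Or.inr (Or.inl hzm))
            · exact Or.inr ⟨h, hzm⟩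
      rwa [heq] at hmem

/-- Iterated shrinking over a finite family of tasks. -/
lemma iterF {ι : Type} (T : Finset ι) (F : ι → Set ℕ → Prop)
    (hmono : ∀ i (P Q : Set ℕ), Q ⊆ P → F i P → F i Q)
    (R : Set ℕ) (hR : R.Infinite)
    (hstep : ∀ i ∈ T, ∀ P, P ⊆ R → P.Infinite → ∃ Q, Q ⊆ P ∧ Q.Infinite ∧ F i Q) :
    ∃ Q, Q ⊆ R ∧ Q.Infinite ∧ ∀ i ∈ T, F i Q := by
  classical
  induction T using Finset.induction with
  | empty => exact ⟨R, subset_rfl, hR, by simp⟩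
  | @insert i T hi ih =>
    obtain ⟨Q, hQR, hQinf, hQ⟩ := ih (fun j hj => hstep j (Finset.mem_insert_of_mem hj))
    obtain ⟨Q', hQ'Q, hQ'inf, hF⟩ := hstep i (Finset.mem_insert_self i T) Q hQR hQinf
    refine ⟨Q', hQ'Q.trans hQR, hQ'inf, ?_⟩
    intro j hj
    rcases Finset.mem_insert.mp hj with rfl | hj
    · exact hF
    · exact hmono j Q Q' hQ'Q (hQ j hj)

/-- The fusion invariant. -/
def InvF (X : ℕ → Set (Set ℕ)) (a : Finset ℕ) (M : Set ℕ)
    (k : ℕ) (Y : Finset ℕ) (R : Set ℕ) : Prop :=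
  R ⊆ M ∧ R.Infinite ∧ (∀ x ∈ a ∪ Y, ∀ z ∈ R, x < z) ∧
  (∀ c ⊆ Y, BadF X a c R) ∧
  (∀ c ⊆ Y, ∀ n < k, ∀ B ⊆ R, B.Infinite → ((↑(a ∪ c) : Set ℕ) ∪ B) ∉ X n)

/-- The fusion step. -/
lemma stepF (X : ℕ → Set (Set ℕ)) (hX : ∀ n, CompletelyRamsey (X n))
    (a : Finset ℕ) (M : Set ℕ) :
    ∀ k Y R, InvF X a M k Y R →
      ∃ p : ℕ × Set ℕ, p.1 ∈ R ∧ p.2 ⊆ R ∧ InvF X a M (k + 1) (insert p.1 Y) p.2 := by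
  classical
  rintro k Y R ⟨hRM, hRinf, hbnd, hbad, hneg⟩
  -- step 1: shrink so that all one-point extensions of subsets of Y are bad
  obtain ⟨R₁, hR₁R, hR₁inf, h₁⟩ :=
    iterF Y.powerset (fun c R' => ∀ x ∈ R', BadF X a (insert x c) R')
      (fun c P Q hQP h x hx => badF_mono (h x (hQP hx)) hQP)
      R hRinf
      (fun c hc P hPR hPinf =>
        KLF X a c P hPinf (badF_mono (hbad c (Finset.mem_powerset.mp hc)) hPR))
  obtain ⟨y, hy⟩ := hR₁inf.nonempty
  set R₂ := R₁ \ Set.Iic y with hR₂def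
  have hR₂inf : R₂.Infinite := hR₁inf.diff (Set.finite_Iic y)
  have hR₂R₁ : R₂ ⊆ R₁ := Set.diff_subset
  have hygt : ∀ z ∈ R₂, y < z := fun z hz => by
    have := hz.2
    simpa using this
  have hbad' : ∀ c, c ⊆ insert y Y → ∀ P, P ⊆ R₂ → BadF X a c P := by
    intro c hc P hP
    by_cases hyc : y ∈ c
    · have hce : c.erase y ⊆ Y := by
        intro z hz
        have hz' := hc (Finset.mem_of_mem_erase hz)
        rcases Finset.mem_insert.mp hz' with h | h
        · exact absurd h (Finset.ne_of_mem_erase hz)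
        · exact h
      have h := h₁ (c.erase y) (Finset.mem_powerset.mpr hce) y hy
      rw [Finset.insert_erase hyc] at h
      exact badF_mono h (hP.trans hR₂R₁)
    · have hcY : c ⊆ Y := by
        intro z hz
        rcases Finset.mem_insert.mp (hc hz) with h | h
        · exact absurd (h ▸ hz) hyc
        · exact h
      exact badF_mono (hbad c hcY) (hP.trans (hR₂R₁.trans hR₁R))
  have hbnd' : ∀ x ∈ a ∪ insert y Y, ∀ z ∈ R₂, x < z := by
    intro x hx z hz
    rcases Finset.mem_union.mp hx with h | h
    · exact hbnd x (Finset.mem_union_left _ h) z (hR₁R (hR₂R₁ hz))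
    · rcases Finset.mem_insert.mp h with rfl | h
      · exact hygt z hz
      · exact hbnd x (Finset.mem_union_right _ h) z (hR₁R (hR₂R₁ hz))
  have hside : ∀ p ∈ (insert y Y).powerset ×ˢ Finset.range (k + 2), ∀ P, P ⊆ R₂ →
      P.Infinite → ∃ Q, Q ⊆ P ∧ Q.Infinite ∧
        ∀ B ⊆ Q, B.Infinite → ((↑(a ∪ p.1) : Set ℕ) ∪ B) ∉ X p.2 := by
    rintro ⟨c, n⟩ hp P hPR₂ hPinf
    have hc : c ⊆ insert y Y := Finset.mem_powerset.mp (Finset.mem_product.mp hp).1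
    have hlt : ∀ x ∈ a ∪ c, ∀ z ∈ P, x < z := by
      intro x hx z hz
      rcases Finset.mem_union.mp hx with h | h
      · exact hbnd' x (Finset.mem_union_left _ h) z (hPR₂ hz)
      · exact hbnd' x (Finset.mem_union_right _ (hc h)) z (hPR₂ hz)
    obtain ⟨N', hN'P, hN'inf, hd⟩ := hX n (a ∪ c) P hPinf hlt
    rcases hd with hpos | hneg'
    · exfalso
      have hGood : GoodF X a c N' := by
        intro B hB hBinf
        have hmem := hpos B hB hBinf
        refine Set.mem_iUnion.mpr ⟨n, ?_⟩
        rwa [Finset.coe_union] at hmem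
      exact hbad' c hc N' (hN'P.trans hPR₂) N' subset_rfl hN'inf hGood
    · exact ⟨N', hN'P, hN'inf, fun B hB hBinf => hneg' B hB hBinf⟩
  obtain ⟨R₃, hR₃R₂, hR₃inf, h₃⟩ :=
    iterF ((insert y Y).powerset ×ˢ Finset.range (k + 2))
      (fun p R' => ∀ B ⊆ R', B.Infinite → ((↑(a ∪ p.1) : Set ℕ) ∪ B) ∉ X p.2)
      (fun p P Q hQP h B hBQ hBinf => h B (hBQ.trans hQP) hBinf)
      R₂ hR₂inf hside
  refine ⟨(y, R₃), hR₁R hy, (hR₃R₂.trans hR₂R₁).trans hR₁R, ?_, hR₃inf, ?_, ?_, ?_⟩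
  · exact ((hR₃R₂.trans hR₂R₁).trans hR₁R).trans hRM
  · exact fun x hx z hz => hbnd' x hx z (hR₃R₂ hz)
  · exact fun c hc => hbad' c hc R₃ hR₃R₂
  · intro c hc n hn B hB hBinf
    exact h₃ (c, n) (Finset.mem_product.mpr
      ⟨Finset.mem_powerset.mpr hc, Finset.mem_range.mpr (by omega)⟩) B hB hBinf

/-- The fusion sequence. -/
noncomputable def chainF (X : ℕ → Set (Set ℕ)) (a : Finset ℕ) (M : Set ℕ)
    (h0 : InvF X a M 0 ∅ M)
    (hstep : ∀ k Y R, InvF X a M k Y R →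
      ∃ p : ℕ × Set ℕ, p.1 ∈ R ∧ p.2 ⊆ R ∧ InvF X a M (k + 1) (insert p.1 Y) p.2) :
    (k : ℕ) → {q : Finset ℕ × Set ℕ // InvF X a M k q.1 q.2} :=
  Nat.rec ⟨(∅, M), h0⟩ (fun k s =>
    ⟨(insert (hstep k s.1.1 s.1.2 s.2).choose.1 s.1.1, (hstep k s.1.1 s.1.2 s.2).choose.2),
      (hstep k s.1.1 s.1.2 s.2).choose_spec.2.2⟩)

lemma chainF_succ (X : ℕ → Set (Set ℕ)) (a : Finset ℕ) (M : Set ℕ)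
    (h0 : InvF X a M 0 ∅ M)
    (hstep : ∀ k Y R, InvF X a M k Y R →
      ∃ p : ℕ × Set ℕ, p.1 ∈ R ∧ p.2 ⊆ R ∧ InvF X a M (k + 1) (insert p.1 Y) p.2)
    (k : ℕ) :
    ∃ y, (chainF X a M h0 hstep (k + 1)).1.1 = insert y (chainF X a M h0 hstep k).1.1 ∧
      y ∈ (chainF X a M h0 hstep k).1.2 ∧
      (chainF X a M h0 hstep (k + 1)).1.2 ⊆ (chainF X a M h0 hstep k).1.2 :=
  ⟨(hstep k (chainF X a M h0 hstep k).1.1 (chainF X a M h0 hstep k).1.2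
      (chainF X a M h0 hstep k).2).choose.1, rfl,
    (hstep k (chainF X a M h0 hstep k).1.1 (chainF X a M h0 hstep k).1.2
      (chainF X a M h0 hstep k).2).choose_spec.1,
    (hstep k (chainF X a M h0 hstep k).1.1 (chainF X a M h0 hstep k).1.2
      (chainF X a M h0 hstep k).2).choose_spec.2.1⟩

/-- Completely Ramsey sets are closed under countable unions. -/
theorem completelyRamsey_iUnion (X : ℕ → Set (Set ℕ))
    (hX : ∀ n, CompletelyRamsey (X n)) :
    CompletelyRamsey (⋃ n, X n) := by
  classical
  intro a M hMinf hlt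
  by_cases hbad : BadF X a ∅ M
  · -- ∅ is bad for M : run the fusion, land in the negative alternative
    have h0 : InvF X a M 0 ∅ M := by
      refine ⟨subset_rfl, hMinf, ?_, ?_, ?_⟩
      · intro x hx z hz
        exact hlt x (by simpa using hx) z hz
      · intro c hc
        have hce : c = ∅ := Finset.subset_empty.mp hc
        subst hce; exact hbad
      · intro c hc n hn
        omega
    have hstep := stepF X hX a M
    have hInv : ∀ k, InvF X a M k
        (chainF X a M h0 hstep k).1.1 (chainF X a M h0 hstep k).1.2 :=
      fun k => (chainF X a M h0 hstep k).2
    choose ysq hYeq hymem hRsub using chainF_succ X a M h0 hstep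
    have hYmono : ∀ {j k : ℕ}, j ≤ k →
        (chainF X a M h0 hstep j).1.1 ⊆ (chainF X a M h0 hstep k).1.1 := by
      intro j k hjk
      induction k with
      | zero =>
        have : j = 0 := Nat.le_zero.mp hjk
        subst this; exact subset_rfl
      | succ n ih =>
        rcases Nat.lt_or_ge j (n + 1) with h | h
        · refine (ih (Nat.lt_succ_iff.mp h)).trans ?_
          rw [hYeq n]
          exact Finset.subset_insert _ _
        · have : j = n + 1 := le_antisymm hjk h
          subst this; exact subset_rfl
    have hRanti : ∀ {j k : ℕ}, j ≤ k →
        (chainF X a M h0 hstep k).1.2 ⊆ (chainF X a M h0 hstep j).1.2 := by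
      intro j k hjk
      induction k with
      | zero =>
        have : j = 0 := Nat.le_zero.mp hjk
        subst this; exact subset_rfl
      | succ n ih =>
        rcases Nat.lt_or_ge j (n + 1) with h | h
        · exact (hRsub n).trans (ih (Nat.lt_succ_iff.mp h))
        · have : j = n + 1 := le_antisymm hjk h
          subst this; exact subset_rfl
    have hymemY : ∀ k, ysq k ∈ (chainF X a M h0 hstep (k + 1)).1.1 := by
      intro k
      rw [hYeq k]
      exact Finset.mem_insert_self _ _
    have hymono : StrictMono ysq := by
      apply strictMono_nat_of_lt_succ
      intro k
      have h1 : ysq (k + 1) ∈ (chainF X a M h0 hstep (k + 1)).1.2 := hymem (k + 1)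
      exact (hInv (k + 1)).2.2.1 (ysq k) (Finset.mem_union_right _ (hymemY k)) _ h1
    set N : Set ℕ := Set.range ysq with hN
    have hNM : N ⊆ M := by
      rintro _ ⟨j, rfl⟩
      exact (hInv j).1 (hymem j)
    have hNinf : N.Infinite := Set.infinite_range_of_injective hymono.injective
    refine ⟨N, hNM, hNinf, Or.inr ?_⟩
    intro B hB hBinf hmem
    rw [Set.mem_iUnion] at hmem
    obtain ⟨n, hn⟩ := hmem
    set c : Finset ℕ := (chainF X a M h0 hstep (n + 1)).1.1.filter (· ∈ B) with hc
    have hcY : c ⊆ (chainF X a M h0 hstep (n + 1)).1.1 := Finset.filter_subset _ _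
    have hcB : ∀ z, z ∈ c → z ∈ B := fun z hz => (Finset.mem_filter.mp hz).2
    have hB'inf : (B \ ↑c).Infinite := hBinf.diff c.finite_toSet
    have hB'sub : B \ ↑c ⊆ (chainF X a M h0 hstep (n + 1)).1.2 := by
      rintro z ⟨hzB, hzc⟩
      obtain ⟨j, rfl⟩ := hB hzB
      rcases Nat.lt_or_ge j (n + 1) with h | h
      · exfalso
        apply hzc
        have : ysq j ∈ (chainF X a M h0 hstep (n + 1)).1.1 :=
          hYmono (Nat.succ_le_of_lt h) (hymemY j)
        simp only [hc, Finset.coe_filter, Set.mem_setOf_eq]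
        exact ⟨this, hzB⟩
      · exact hRanti h (hymem j)
    have hnot := (hInv (n + 1)).2.2.2.2 c hcY n (Nat.lt_succ_self n)
      (B \ ↑c) hB'sub hB'inf
    apply hnot
    have heq : (↑(a ∪ c) : Set ℕ) ∪ (B \ ↑c) = ↑a ∪ B := by
      rw [Finset.coe_union]
      ext z
      simp only [Set.mem_union, Set.mem_diff, Finset.mem_coe]
      constructor
      · rintro ((h | h) | ⟨h, _⟩)
        · exact Or.inl h
        · exact Or.inr (hcB z h)
        · exact Or.inr h
      · rintro (h | h)
        · exact Or.inl (Or.inl h)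
        · by_cases hzc : z ∈ c
          · exact Or.inl (Or.inr hzc)
          · exact Or.inr ⟨h, hzc⟩
    rw [heq]
    exact hn
  · -- ∅ is not bad for M : some infinite subset is good, the positive alternative
    unfold BadF at hbad
    push_neg at hbad
    obtain ⟨Q, hQM, hQinf, hG⟩ := hbad
    refine ⟨Q, hQM, hQinf, Or.inl ?_⟩
    intro B hB hBinf
    have := hG B hB hBinf
    simpa using this
end

section
/- In a Fraïssé class of relational structures, the disjoint (strong) amalgamation property implies the strong embedding property for its Fraïssé limit K: for any finite structure A in the class, any vertex v of A, and any embedding φ of A minus v into K, there are infinitely many distinct extensions of φ to embeddings of A into K. -/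
open FirstOrder FirstOrder.Language

variable {L : FirstOrder.Language}

/-- A class of structures has the disjoint (strong) amalgamation property if any two
embeddings `f : A ↪ B`, `g : A ↪ C` can be amalgamated in some `D ∈ K` via
`e' : B ↪ D`, `f' : C ↪ D` with `e' ∘ f = f' ∘ g` and
`e'[B] ∩ f'[C] = e'[f[A]]`. -/
def DisjointAmalgamation (K : Set (CategoryTheory.Bundled.{w} L.Structure)) : Prop :=
  ∀ A B C : CategoryTheory.Bundled L.Structure, A ∈ K → B ∈ K → C ∈ K →
    ∀ (f : A ↪[L] B) (g : A ↪[L] C),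
      ∃ D : CategoryTheory.Bundled L.Structure, D ∈ K ∧ ∃ (e' : B ↪[L] D) (f' : C ↪[L] D),
        e'.comp f = f'.comp g ∧
        Set.range ⇑e' ∩ Set.range ⇑f' = Set.range ⇑(e'.comp f)

/-- In a Fraïssé class of relational structures, disjoint amalgamation implies the strong
embedding property for the Fraïssé limit `M`: for every `A` in the class, every vertex
`v` of `A`, and every embedding `φ` of `A` minus `v` into `M`, there are infinitely many
distinct extensions of `φ` to embeddings of `A` into `M`. -/
theorem disjointAmalgamation_strongEmbedding
    [L.IsRelational] (hfin : ∀ n, Finite (L.Relations n))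
    (K : Set (CategoryTheory.Bundled.{0} L.Structure)) (hK : IsFraisse K)
    (hDAP : DisjointAmalgamation K)
    (M : Type) [L.Structure M] [Countable M] (hM : IsFraisseLimit K M)
    (A : CategoryTheory.Bundled.{0} L.Structure) (hA : A ∈ K) (v : A)
    (φ : ↥(Substructure.closure L {w : A | w ≠ v}) ↪[L] M) :
    {ψ : A ↪[L] M | ∀ x : ↥(Substructure.closure L {w : A | w ≠ v}), ψ ↑x = φ x}.Infinite := by
  classical
  let Bs : L.Substructure A := Substructure.closure L {w : A | w ≠ v}
  haveI : Finite A := (hK.FG A hA).finite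
  have hvB : v ∉ Bs := by
    rw [show Bs = Substructure.closure L {w : A | w ≠ v} from rfl,
      Substructure.mem_closure_iff_of_isRelational]
    simp
  have hBfg : Structure.FG L ↥Bs := by
    rw [← Substructure.fg_iff_structure_fg, Substructure.fg_iff_finite]
    infer_instance
  have hBK : (⟨↥Bs, inferInstance⟩ : CategoryTheory.Bundled L.Structure) ∈ K :=
    hK.hereditary A hA ⟨hBfg, ⟨Bs.subtype⟩⟩
  by_contra hinf
  rw [Set.not_infinite] at hinf
  let T : Finset M := hinf.toFinset.image (fun ψ => ψ v)
  let Ss : L.Substructure M := Substructure.closure L (Set.range ⇑φ ∪ ↑T)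
  have hsubS : Set.range ⇑φ ∪ ↑T ⊆ ↑Ss := Substructure.subset_closure
  have hSeq : (Ss : Set M) = Set.range ⇑φ ∪ ↑T :=
    Substructure.closure_eq_of_isRelational L _
  haveI : Finite ↥Ss :=
    (show (Ss : Set M).Finite from
      hSeq ▸ ((Set.finite_range _).union T.finite_toSet)).to_subtype
  have hSfg : Structure.FG L ↥Ss := by
    rw [← Substructure.fg_iff_structure_fg, Substructure.fg_iff_finite]
    infer_instance
  have hSK : (⟨↥Ss, inferInstance⟩ : CategoryTheory.Bundled L.Structure) ∈ K := by
    rw [← hM.age]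
    exact ⟨hSfg, ⟨Ss.subtype⟩⟩
  let φ' : ↥Bs ↪[L] ↥Ss :=
    FirstOrder.Language.Embedding.codRestrict Ss φ (fun c => hsubS (Or.inl ⟨c, rfl⟩))
  obtain ⟨D, hD, e', f', hcomm, hdisj⟩ :=
    hDAP ⟨↥Bs, inferInstance⟩ A ⟨↥Ss, inferInstance⟩ hBK hA hSK
      Bs.subtype φ'
  have hDage : D ∈ L.age M := by rw [hM.age]; exact hD
  haveI : Nonempty (D ↪[L] M) := hDage.2
  obtain ⟨F, hF⟩ := hM.ultrahomogeneous.extend_embedding hSfg Ss.subtype f'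
  let ψ : A ↪[L] M := F.comp e'
  have hψmem : ∀ x : ↥Bs, ψ ↑x = φ x := by
    intro x
    have h1 : e' (Bs.subtype x) = f' (φ' x) := DFunLike.congr_fun hcomm x
    have h2 : Ss.subtype (φ' x) = F (f' (φ' x)) := DFunLike.congr_fun hF (φ' x)
    calc ψ ↑x = F (e' (Bs.subtype x)) := rfl
      _ = F (f' (φ' x)) := by rw [h1]
      _ = Ss.subtype (φ' x) := h2.symm
      _ = φ x := rfl
  have hψT : ψ v ∈ T := by
    exact Finset.mem_image.2 ⟨ψ, (Set.Finite.mem_toFinset hinf).2 (by exact hψmem), rfl⟩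
  have hψS : ψ v ∈ Ss := hsubS (Or.inr hψT)
  have hfe : f' ⟨ψ v, hψS⟩ = e' v := by
    apply F.injective
    have h2 : Ss.subtype ⟨ψ v, hψS⟩ = F (f' ⟨ψ v, hψS⟩) := DFunLike.congr_fun hF _
    rw [← h2]
    rfl
  have hmem : e' v ∈ Set.range ⇑e' ∩ Set.range ⇑f' := ⟨⟨v, rfl⟩, ⟨_, hfe⟩⟩
  rw [hdisj] at hmem
  obtain ⟨b, hb⟩ := hmem
  have hbv : Bs.subtype b = v := e'.injective hb
  exact hvB (hbv ▸ b.2)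
end

section
/- Homogeneity lemma for chosen conditions: suppose for each increasing tuple ᾱ ∈ [K]^m (K a set of ordinals) a condition p_ᾱ is chosen such that (i) the lengths k_ᾱ = |δ_{p_ᾱ}| are all equal to k*, (ii) the values p_ᾱ(i, δ_ᾱ(j)) depend only on (i,j), and (iii) for any ᾱ, β̄ and j, j' < k*, δ_ᾱ(j) = δ_β̄(j') implies j = j'. Then for any finite set J of tuples from K, the union ⋃{p_ᾱ : ᾱ ∈ J} is a function extending each p_ᾱ, hence a common lower bound in the poset of finite partial functions ordered by reverse inclusion. -/
/-- Homogeneity lemma for chosen conditions.  Conditions are finite partial functions,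
modelled as pairs `(δ, val)` with finite domain `{0,…,i*-1} × δ`, ordered by reverse
inclusion.  Suppose for each increasing tuple `ᾱ` from a set `K` of "ordinals" a
condition `p ᾱ` is chosen so that (i) all the sets `δ_{p ᾱ}` have the same size `k*`,
(ii) the value at `(i, δ_ᾱ(j))` (where `δ_ᾱ(j)` is the `j`-th element of `δ_{p ᾱ}` in
increasing order) depends only on `(i, j)`, and (iii) `δ_ᾱ(j) = δ_β(j')` implies
`j = j'`.  Then for any finite set `J` of such tuples, the union of the conditions
`p ᾱ`, `ᾱ ∈ J`, is a function extending each of them, hence a common lower bound. -/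
theorem homogeneity_common_lower_bound {κ V : Type*} [LinearOrder κ]
    {m kstar istar : ℕ} (K : Set κ)
    (p : (Fin m → κ) → Finset κ × (Fin istar → κ → V))
    (hcard : ∀ a : Fin m → κ, (p a).1.card = kstar)
    (t : Fin istar → Fin kstar → V)
    (hval : ∀ a : Fin m → κ, StrictMono a → (∀ j, a j ∈ K) →
      ∀ (i : Fin istar) (j : Fin kstar),
        (p a).2 i ((p a).1.orderEmbOfFin (hcard a) j) = t i j)
    (hinj : ∀ a b : Fin m → κ, StrictMono a → (∀ j, a j ∈ K) →
      StrictMono b → (∀ j, b j ∈ K) →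
      ∀ j j' : Fin kstar,
        (p a).1.orderEmbOfFin (hcard a) j = (p b).1.orderEmbOfFin (hcard b) j' →
          j = j')
    (J : Finset (Fin m → κ))
    (hJ : ∀ a ∈ J, StrictMono a ∧ ∀ j, a j ∈ K) :
    ∃ P : Finset κ × (Fin istar → κ → V),
      (∀ a ∈ J, (p a).1 ⊆ P.1 ∧
        ∀ i : Fin istar, ∀ d ∈ (p a).1, P.2 i d = (p a).2 i d) ∧
      P.1 = J.sup (fun a => (p a).1) := by

  classical
  refine ⟨⟨J.sup (fun a => (p a).1),
    fun i d => if h : ∃ a ∈ J, d ∈ (p a).1 then (p h.choose).2 i d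
      else (p (fun _ => d)).2 i d⟩, ?_, rfl⟩
  intro a ha
  refine ⟨Finset.le_sup (f := fun a => (p a).1) ha, ?_⟩
  intro i d hd
  have h : ∃ a ∈ J, d ∈ (p a).1 := ⟨a, ha, hd⟩
  simp only [dif_pos h]
  set b := h.choose with hb
  have hbJ : b ∈ J := h.choose_spec.1
  have hdb : d ∈ (p b).1 := h.choose_spec.2
  -- d is in the range of both orderEmbOfFin
  have hda : ∃ j, (p a).1.orderEmbOfFin (hcard a) j = d := by
    have := Finset.range_orderEmbOfFin (p a).1 (hcard a)
    rw [Set.ext_iff] at this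
    exact (this d).2 hd
  have hdb' : ∃ j, (p b).1.orderEmbOfFin (hcard b) j = d := by
    have := Finset.range_orderEmbOfFin (p b).1 (hcard b)
    rw [Set.ext_iff] at this
    exact (this d).2 hdb
  obtain ⟨j, hj⟩ := hda
  obtain ⟨j', hj'⟩ := hdb'
  obtain ⟨hma, hKa⟩ := hJ a ha
  obtain ⟨hmb, hKb⟩ := hJ b hbJ
  have hjj : j' = j := hinj b a hmb hKb hma hKa j' j (by rw [hj, hj'])
  calc (p b).2 i d = t i j' := by rw [← hj']; exact hval b hmb hKb i j'
    _ = t i j := by rw [hjj]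
    _ = (p a).2 i d := by rw [← hj]; exact (hval a hma hKa i j).symm
end
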